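/- arXiv:2110.05907 — 7 statements merged into one kernel-verified Lean document; each statement's English description precedes it below -/
import Mathlib

section
/- For every q₀ ∈ L¹(ℝ), σ ∈ {1, −1} and k ∈ ℝ, the left Jost system has exactly one bounded measurable solution f = (f₁, f₂) on (−∞, 0]; this solution is continuous and satisfies max(|f₁(x)|, |f₂(x)|) ≤ exp(‖q₀‖_{L¹}) for every x ≤ 0. -/
open MeasureTheory

/-- A function is bounded and measurable on the set `s`. -/
def BddMeasOn (s : Set ℝ) (f : ℝ → ℂ × ℂ) : Prop :=
  Measurable (s.restrict f) ∧ ∃ C : ℝ, ∀ x ∈ s, ‖f x‖ ≤ C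

/-- The left (first-column) Jost system on `(-∞, 0]` with potential `q₀`,
sign `σ` and spectral parameter `k`:
`f₁(x) = 1 + ∫_{-∞}^x q₀(y) f₂(y) dy`,
`f₂(x) = -σ ∫_{-∞}^x e^{-2ik(y-x)} conj(q₀(-y)) f₁(y) dy`. -/
def LeftJost1 (q₀ : ℝ → ℂ) (σ : ℝ) (k : ℝ) (f : ℝ → ℂ × ℂ) : Prop :=
  ∀ x : ℝ, x ≤ 0 →
    ((f x).1 = 1 + ∫ y in Set.Iic x, q₀ y * (f y).2) ∧
    ((f x).2 = -(σ : ℂ) * ∫ y in Set.Iic x,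
      Complex.exp (-2 * Complex.I * (k : ℂ) * ((y : ℂ) - (x : ℂ))) *
        (starRingEnd ℂ) (q₀ (-y)) * (f y).1)

/-- The left (second-column) Jost system on `(-∞, 0]`:
`p₁(x) = ∫_{-∞}^x e^{2ik(y-x)} q₀(y) p₂(y) dy`,
`p₂(x) = 1 - σ ∫_{-∞}^x conj(q₀(-y)) p₁(y) dy`. -/
def LeftJost2 (q₀ : ℝ → ℂ) (σ : ℝ) (k : ℝ) (p : ℝ → ℂ × ℂ) : Prop :=
  ∀ x : ℝ, x ≤ 0 →
    ((p x).1 = ∫ y in Set.Iic x,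
      Complex.exp (2 * Complex.I * (k : ℂ) * ((y : ℂ) - (x : ℂ))) * q₀ y * (p y).2) ∧
    ((p x).2 = 1 - (σ : ℂ) * ∫ y in Set.Iic x, (starRingEnd ℂ) (q₀ (-y)) * (p y).1)

/-- The right (first-column) Jost system on `[0, ∞)`:
`g₁(x) = 1 - ∫_x^∞ q₀(y) g₂(y) dy`,
`g₂(x) = σ ∫_x^∞ e^{-2ik(y-x)} conj(q₀(-y)) g₁(y) dy`. -/
def RightJost1 (q₀ : ℝ → ℂ) (σ : ℝ) (k : ℝ) (g : ℝ → ℂ × ℂ) : Prop :=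
  ∀ x : ℝ, 0 ≤ x →
    ((g x).1 = 1 - ∫ y in Set.Ici x, q₀ y * (g y).2) ∧
    ((g x).2 = (σ : ℂ) * ∫ y in Set.Ici x,
      Complex.exp (-2 * Complex.I * (k : ℂ) * ((y : ℂ) - (x : ℂ))) *
        (starRingEnd ℂ) (q₀ (-y)) * (g y).1)

/-- The right (second-column) Jost system on `[0, ∞)`:
`h₁(x) = -∫_x^∞ e^{2ik(y-x)} q₀(y) h₂(y) dy`,
`h₂(x) = 1 + σ ∫_x^∞ conj(q₀(-y)) h₁(y) dy`. -/
def RightJost2 (q₀ : ℝ → ℂ) (σ : ℝ) (k : ℝ) (h : ℝ → ℂ × ℂ) : Prop :=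
  ∀ x : ℝ, 0 ≤ x →
    ((h x).1 = -∫ y in Set.Ici x,
      Complex.exp (2 * Complex.I * (k : ℂ) * ((y : ℂ) - (x : ℂ))) * q₀ y * (h y).2) ∧
    ((h x).2 = 1 + (σ : ℂ) * ∫ y in Set.Ici x, (starRingEnd ℂ) (q₀ (-y)) * (h y).1)


open MeasureTheory Set Filter

namespace JostAux1

noncomputable def QQ (q₀ : ℝ → ℂ) (y : ℝ) : ℝ := ‖q₀ y‖ + ‖q₀ (-y)‖

noncomputable def WW (q₀ : ℝ → ℂ) (x : ℝ) : ℝ := ∫ y in Set.Iic x, QQ q₀ y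

variable {q₀ : ℝ → ℂ}

lemma QQ_nonneg (y : ℝ) : 0 ≤ QQ q₀ y := add_nonneg (norm_nonneg _) (norm_nonneg _)

lemma integrable_qneg (hq₀ : Integrable q₀) : Integrable (fun y => q₀ (-y)) := by
  have h := (Measure.measurePreserving_neg (volume : Measure ℝ)).integrable_comp_emb
    measurableEmbedding_neg (g := q₀)
  exact h.2 hq₀

lemma integrable_QQ (hq₀ : Integrable q₀) : Integrable (QQ q₀) :=
  hq₀.norm.add (integrable_qneg hq₀).norm

/-- Extend a set-bounded a.e.-strongly-measurable function times an integrable function is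
integrable on the set. -/
lemma integrableOn_mul_bdd {𝕜 : Type*} [RCLike 𝕜] {s : Set ℝ} (hs : MeasurableSet s)
    {q : ℝ → 𝕜} (hq : IntegrableOn q s) {f : ℝ → 𝕜}
    (hfm : AEStronglyMeasurable f (volume.restrict s)) {C : ℝ}
    (hb : ∀ y ∈ s, ‖f y‖ ≤ C) : IntegrableOn (fun y => q y * f y) s := by
  refine Integrable.mono' (hq.norm.smul C) (hq.aestronglyMeasurable.mul hfm) ?_
  refine (ae_restrict_iff' hs).2 (Filter.Eventually.of_forall fun y hy => ?_)
  have : ‖q y * f y‖ = ‖q y‖ * ‖f y‖ := norm_mul _ _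
  rw [this]
  calc ‖q y‖ * ‖f y‖ ≤ ‖q y‖ * C :=
        mul_le_mul_of_nonneg_left (hb y hy) (norm_nonneg _)
    _ = C • ‖q y‖ := by rw [smul_eq_mul]; ring

lemma continuous_integral_Iic {E : Type*} [NormedAddCommGroup E] [NormedSpace ℝ E]
    {g : ℝ → E} (hg : Integrable g) : Continuous (fun x => ∫ y in Set.Iic x, g y) := by
  have h : (fun x => ∫ y in Set.Iic x, g y)
      = fun x => (∫ y in Set.Iic 0, g y) + ∫ y in (0:ℝ)..x, g y := by
    funext x
    rw [← intervalIntegral.integral_Iic_sub_Iic hg.integrableOn hg.integrableOn]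
    abel
  rw [h]
  exact continuous_const.add (hg.continuous_primitive 0)

lemma WW_cont (hq₀ : Integrable q₀) : Continuous (WW q₀) :=
  continuous_integral_Iic (integrable_QQ hq₀)

lemma WW_nonneg (hq₀ : Integrable q₀) (x : ℝ) : 0 ≤ WW q₀ x :=
  setIntegral_nonneg measurableSet_Iic (fun y _ => QQ_nonneg y)

lemma WW_mono (hq₀ : Integrable q₀) : Monotone (WW q₀) := by
  intro a b hab
  refine setIntegral_mono_set ((integrable_QQ hq₀).integrableOn) ?_ ?_
  · exact Filter.Eventually.of_forall fun y => QQ_nonneg y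
  · exact Filter.Eventually.of_forall fun y hy => le_trans hy hab

lemma WW_le_total (hq₀ : Integrable q₀) (x : ℝ) : WW q₀ x ≤ ∫ y, QQ q₀ y := by
  rw [← setIntegral_univ]
  refine setIntegral_mono_set ((integrable_QQ hq₀).integrableOn) ?_ ?_
  · exact Filter.Eventually.of_forall fun y => QQ_nonneg y
  · exact Filter.Eventually.of_forall fun y _ => trivial

lemma WW_tendsto_atBot (hq₀ : Integrable q₀) : Tendsto (WW q₀) atBot (nhds 0) := by
  have h : WW q₀ = fun x => ∫ y, (Set.Iic x).indicator (QQ q₀) y := by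
    funext x
    rw [integral_indicator measurableSet_Iic]; rfl
  rw [h]
  have h0 : (0:ℝ) = ∫ y : ℝ, (0:ℝ) := by simp
  rw [h0]
  refine tendsto_integral_filter_of_dominated_convergence (QQ q₀) ?_ ?_
    (integrable_QQ hq₀) ?_
  · exact Filter.Eventually.of_forall fun x =>
      ((integrable_QQ hq₀).aestronglyMeasurable.indicator measurableSet_Iic)
  · refine Filter.Eventually.of_forall fun x => Filter.Eventually.of_forall fun y => ?_
    refine (norm_indicator_le_norm_self _ _).trans ?_
    rw [Real.norm_eq_abs, abs_of_nonneg (QQ_nonneg y)]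
  · refine Filter.Eventually.of_forall fun y => ?_
    refine Filter.Tendsto.congr' ?_ tendsto_const_nhds
    filter_upwards [eventually_lt_atBot y] with x hx
    simp [Set.indicator_apply, Set.mem_Iic, not_le.2 hx]


lemma WW_zero (hq₀ : Integrable q₀) : WW q₀ 0 = ∫ y, ‖q₀ y‖ := by
  unfold WW QQ
  rw [integral_add (hq₀.norm.integrableOn) ((integrable_qneg hq₀).norm.integrableOn)]
  have h2 : (∫ y in Set.Iic (0:ℝ), ‖q₀ (-y)‖) = ∫ y in Set.Ioi (0:ℝ), ‖q₀ y‖ := by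
    have := integral_comp_neg_Iic (0:ℝ) (fun y => ‖q₀ y‖)
    simpa using this
  rw [h2, intervalIntegral.integral_Iic_add_Ioi hq₀.norm.integrableOn hq₀.norm.integrableOn]

lemma integrable_QQ_WWpow (hq₀ : Integrable q₀) (n : ℕ) :
    Integrable (fun y => QQ q₀ y * WW q₀ y ^ n) := by
  rw [← integrableOn_univ]
  refine integrableOn_mul_bdd (𝕜 := ℝ) MeasurableSet.univ
    (integrable_QQ hq₀).integrableOn
    (((WW_cont hq₀).pow n).aestronglyMeasurable.restrict) (C := (∫ z, QQ q₀ z) ^ n) ?_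
  intro y _
  have h0 := WW_nonneg hq₀ y
  calc ‖WW q₀ y ^ n‖ = WW q₀ y ^ n := by
        rw [Real.norm_eq_abs, abs_of_nonneg (pow_nonneg h0 n)]
    _ ≤ (∫ z, QQ q₀ z) ^ n := pow_le_pow_left₀ h0 (WW_le_total hq₀ y) n

lemma integral_QQ_Ioc (hq₀ : Integrable q₀) {a b : ℝ} (hab : a ≤ b) :
    ∫ y in Set.Ioc a b, QQ q₀ y = WW q₀ b - WW q₀ a := by
  rw [← intervalIntegral.integral_of_le hab,
    ← intervalIntegral.integral_Iic_sub_Iic ((integrable_QQ hq₀).integrableOn)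
      ((integrable_QQ hq₀).integrableOn)]
  rfl

lemma chunk (hq₀ : Integrable q₀) (n : ℕ) {a b : ℝ} (hab : a ≤ b) :
    ∫ y in Set.Ioc a b, QQ q₀ y * WW q₀ y ^ n ≤ WW q₀ b ^ n * (WW q₀ b - WW q₀ a) := by
  have h1 : ∫ y in Set.Ioc a b, QQ q₀ y * WW q₀ y ^ n
      ≤ ∫ y in Set.Ioc a b, QQ q₀ y * WW q₀ b ^ n := by
    refine setIntegral_mono_on ((integrable_QQ_WWpow hq₀ n).integrableOn)
      (((integrable_QQ hq₀).mul_const _).integrableOn) measurableSet_Ioc ?_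
    intro y hy
    exact mul_le_mul_of_nonneg_left
      (pow_le_pow_left₀ (WW_nonneg hq₀ y) (WW_mono hq₀ hy.2) n) (QQ_nonneg y)
  refine h1.trans (le_of_eq ?_)
  rw [integral_mul_const, integral_QQ_Ioc hq₀ hab]; ring

lemma head (hq₀ : Integrable q₀) (n : ℕ) (b : ℝ) :
    ∫ y in Set.Iic b, QQ q₀ y * WW q₀ y ^ n ≤ WW q₀ b ^ n * WW q₀ b := by
  have h1 : ∫ y in Set.Iic b, QQ q₀ y * WW q₀ y ^ n
      ≤ ∫ y in Set.Iic b, QQ q₀ y * WW q₀ b ^ n := by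
    refine setIntegral_mono_on ((integrable_QQ_WWpow hq₀ n).integrableOn)
      (((integrable_QQ hq₀).mul_const _).integrableOn) measurableSet_Iic ?_
    intro y hy
    exact mul_le_mul_of_nonneg_left
      (pow_le_pow_left₀ (WW_nonneg hq₀ y) (WW_mono hq₀ hy) n) (QQ_nonneg y)
  refine h1.trans (le_of_eq ?_)
  rw [integral_mul_const]
  have : (∫ y in Set.Iic b, QQ q₀ y) = WW q₀ b := rfl
  rw [this]; ring

lemma exists_WW_eq (hq₀ : Integrable q₀) {x t : ℝ} (ht0 : 0 < t) (htx : t ≤ WW q₀ x) :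
    ∃ y, y ≤ x ∧ WW q₀ y = t := by
  have h := (WW_tendsto_atBot hq₀).eventually_lt_const ht0
  obtain ⟨a, ha⟩ := (h.and (eventually_le_atBot x)).exists
  have hIcc : t ∈ Set.Icc (WW q₀ a) (WW q₀ x) := ⟨ha.1.le, htx⟩
  obtain ⟨y, hy, hyt⟩ := intermediate_value_Icc ha.2 ((WW_cont hq₀).continuousOn) hIcc
  exact ⟨y, hy.2, hyt⟩

lemma bern (n : ℕ) : ∀ a : ℝ, 0 ≤ a → a^(n+1) + ((n:ℝ)+1) * a^n ≤ (a+1)^(n+1) := by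
  induction n with
  | zero => intro a _; norm_num
  | succ n ih =>
    intro a ha
    have h := ih a ha
    have h2 : (a+1) * (a^(n+1) + ((n:ℝ)+1)*a^n) ≤ (a+1)*(a+1)^(n+1) :=
      mul_le_mul_of_nonneg_left h (by linarith)
    have hpn := pow_nonneg ha n
    have e1 : (a+1) * (a^(n+1) + ((n:ℝ)+1)*a^n)
        = a^(n+1+1) + ((n:ℝ)+1+1)*a^(n+1) + ((n:ℝ)+1)*a^n := by ring
    have e2 : (a+1)*(a+1)^(n+1) = (a+1)^(n+1+1) := by ring
    have hn0 : (0:ℝ) ≤ ((n:ℝ)+1) * a^n := by positivity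
    push_cast
    linarith [h2, e1, e2, hn0]

lemma sum_pow_le (n : ℕ) (m : ℕ) :
    (∑ i ∈ Finset.range m, ((i:ℝ)+1)^n) ≤ ((m:ℝ)+1)^(n+1)/((n:ℝ)+1) := by
  induction m with
  | zero => simp; positivity
  | succ m ih =>
    rw [Finset.sum_range_succ]
    have hn : (0:ℝ) < (n:ℝ)+1 := by positivity
    have hb := bern n ((m:ℝ)+1) (by positivity)
    have hd1 : ((m:ℝ)+1)^(n+1)/((n:ℝ)+1) * ((n:ℝ)+1) = ((m:ℝ)+1)^(n+1) :=
      div_mul_cancel₀ _ hn.ne'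
    have hd2 : ((m:ℝ)+1+1)^(n+1)/((n:ℝ)+1) * ((n:ℝ)+1) = ((m:ℝ)+1+1)^(n+1) :=
      div_mul_cancel₀ _ hn.ne'
    push_cast
    nlinarith [ih, hb]

lemma key (hq₀ : Integrable q₀) (n : ℕ) (x : ℝ) :
    ∫ y in Set.Iic x, QQ q₀ y * WW q₀ y ^ n ≤ WW q₀ x ^ (n+1) / ((n:ℝ)+1) := by
  rcases eq_or_lt_of_le (WW_nonneg hq₀ x) with h0 | hpos
  · have hh := head hq₀ n x
    rw [← h0] at hh ⊢
    have : (0:ℝ)^n * 0 = 0 := by ring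
    rw [this] at hh
    refine hh.trans ?_
    rw [zero_pow (Nat.succ_ne_zero n), zero_div]
  · have hbound : ∀ m : ℕ, 1 ≤ m →
        (∫ y in Set.Iic x, QQ q₀ y * WW q₀ y ^ n)
          ≤ WW q₀ x ^ (n+1) / ((n:ℝ)+1) * (((m:ℝ)+1)/(m:ℝ))^(n+1) := by
      intro m hm
      have hmR : (1:ℝ) ≤ (m:ℝ) := by exact_mod_cast hm
      have hm0 : (0:ℝ) < (m:ℝ) := by linarith
      set Δ : ℝ := WW q₀ x / m with hΔ
      have hΔpos : 0 < Δ := div_pos hpos hm0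
      have hmΔ : (m:ℝ) * Δ = WW q₀ x := by
        rw [hΔ]; field_simp
      have hy : ∀ j : ℕ, ∃ y, (1 ≤ j → j ≤ m → (y ≤ x ∧ WW q₀ y = j * Δ)) := by
        intro j
        by_cases hj : 1 ≤ j ∧ j ≤ m
        · have hj1R : (1:ℝ) ≤ (j:ℝ) := by exact_mod_cast hj.1
          have hjmR : (j:ℝ) ≤ (m:ℝ) := by exact_mod_cast hj.2
          obtain ⟨y, h1, h2⟩ := exists_WW_eq hq₀ (t := (j:ℝ) * Δ)
            (by nlinarith) (by nlinarith)
          exact ⟨y, fun _ _ => ⟨h1, h2⟩⟩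
        · exact ⟨x, fun ha hb => absurd ⟨ha, hb⟩ hj⟩
      choose Y hY using hy
      have hYle : ∀ j, 1 ≤ j → j ≤ m → Y j ≤ x := fun j h1 h2 => (hY j h1 h2).1
      have hYW : ∀ j, 1 ≤ j → j ≤ m → WW q₀ (Y j) = j * Δ := fun j h1 h2 => (hY j h1 h2).2
      have hYmono : ∀ j, 1 ≤ j → j+1 ≤ m → Y j ≤ Y (j+1) := by
        intro j h1 h2
        by_contra hlt
        push_neg at hlt
        have hmm := WW_mono hq₀ hlt.le
        rw [hYW j h1 (by omega), hYW (j+1) (by omega) h2] at hmm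
        push_cast at hmm
        nlinarith
      have hind : ∀ j, 1 ≤ j → j ≤ m →
          (∫ y in Set.Iic (Y j), QQ q₀ y * WW q₀ y ^ n)
            ≤ Δ^(n+1) * ∑ i ∈ Finset.range j, ((i:ℝ)+1)^n := by
        intro j
        induction j with
        | zero => intro h; omega
        | succ j ih =>
          intro _ h2
          by_cases hj : j = 0
          · subst hj
            have hh := head hq₀ n (Y 1)
            rw [hYW 1 le_rfl h2] at hh
            refine hh.trans (le_of_eq ?_)
            rw [Finset.sum_range_one]
            push_cast
            ring
          · have hj1 : 1 ≤ j := Nat.one_le_iff_ne_zero.2 hj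
            have hIH := ih hj1 (le_trans (Nat.le_succ j) h2)
            have hYm := hYmono j hj1 h2
            have hsplit : (∫ y in Set.Iic (Y (j+1)), QQ q₀ y * WW q₀ y ^ n)
                = (∫ y in Set.Iic (Y j), QQ q₀ y * WW q₀ y ^ n)
                  + ∫ y in Set.Ioc (Y j) (Y (j+1)), QQ q₀ y * WW q₀ y ^ n := by
              have hs := intervalIntegral.integral_Iic_sub_Iic
                (f := fun y => QQ q₀ y * WW q₀ y ^ n) (μ := volume)
                ((integrable_QQ_WWpow hq₀ n).integrableOn)
                ((integrable_QQ_WWpow hq₀ n).integrableOn) (a := Y j) (b := Y (j+1))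
              rw [intervalIntegral.integral_of_le hYm] at hs
              linarith
            rw [hsplit, Finset.sum_range_succ, mul_add]
            have hc := chunk hq₀ n hYm
            rw [hYW j hj1 (le_trans (Nat.le_succ j) h2), hYW (j+1) (by omega) h2] at hc
            have heq : (((j:ℝ)+1)*Δ)^n * (((j:ℝ)+1)*Δ - (j:ℝ)*Δ) = Δ^(n+1) * ((j:ℝ)+1)^n := by
              rw [mul_pow]; ring
            push_cast at hc
            rw [heq] at hc
            linarith
      have hYmle := hYle m hm le_rfl
      have hsplit2 : (∫ y in Set.Iic x, QQ q₀ y * WW q₀ y ^ n)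
          = (∫ y in Set.Iic (Y m), QQ q₀ y * WW q₀ y ^ n)
            + ∫ y in Set.Ioc (Y m) x, QQ q₀ y * WW q₀ y ^ n := by
        have hs := intervalIntegral.integral_Iic_sub_Iic
          (f := fun y => QQ q₀ y * WW q₀ y ^ n) (μ := volume)
          ((integrable_QQ_WWpow hq₀ n).integrableOn)
          ((integrable_QQ_WWpow hq₀ n).integrableOn) (a := Y m) (b := x)
        rw [intervalIntegral.integral_of_le hYmle] at hs
        linarith
      have hc2 := chunk hq₀ n hYmle
      rw [hYW m hm le_rfl, hmΔ] at hc2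
      have hc2' : (∫ y in Set.Ioc (Y m) x, QQ q₀ y * WW q₀ y ^ n) ≤ 0 := by
        calc (∫ y in Set.Ioc (Y m) x, QQ q₀ y * WW q₀ y ^ n)
            ≤ WW q₀ x ^ n * (WW q₀ x - WW q₀ x) := hc2
          _ = 0 := by ring
      have hsum := sum_pow_le n m
      have hmain := hind m hm le_rfl
      have hfin : (∫ y in Set.Iic x, QQ q₀ y * WW q₀ y ^ n)
          ≤ Δ^(n+1) * (((m:ℝ)+1)^(n+1)/((n:ℝ)+1)) := by
        rw [hsplit2]
        have := mul_le_mul_of_nonneg_left hsum (le_of_lt (pow_pos hΔpos (n+1)))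
        linarith
      refine hfin.trans (le_of_eq ?_)
      rw [hΔ]
      simp only [div_pow]
      field_simp
    have h1 : Tendsto (fun m : ℕ => 1 + 1/(m:ℝ)) atTop (nhds 1) := by
      simpa using (tendsto_const_nhds (x := (1:ℝ))).add tendsto_one_div_atTop_nhds_zero_nat
    have h2 := (h1.pow (n+1)).const_mul (WW q₀ x ^ (n+1) / ((n:ℝ)+1))
    rw [one_pow, mul_one] at h2
    refine ge_of_tendsto (f := fun m : ℕ => WW q₀ x ^ (n+1) / ((n:ℝ)+1) * (((m:ℝ)+1)/(m:ℝ))^(n+1))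
      (h2.congr' ?_) ?_
    · filter_upwards [eventually_ge_atTop 1] with m hm
      have hm0 : (0:ℝ) < (m:ℝ) := by exact_mod_cast hm
      congr 1
      rw [add_div, div_self hm0.ne']
    · filter_upwards [eventually_ge_atTop 1] with m hm
      exact hbound m hm


/-! ## The Picard operator -/

noncomputable def TT (q₀ : ℝ → ℂ) (σ k : ℝ) (f : ℝ → ℂ × ℂ) (x : ℝ) : ℂ × ℂ :=
  (1 + ∫ y in Set.Iic x, q₀ y * (f y).2,
   -(σ:ℂ) * ∫ y in Set.Iic x,
      Complex.exp (-2 * Complex.I * (k : ℂ) * ((y : ℂ) - (x : ℂ))) *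
        (starRingEnd ℂ) (q₀ (-y)) * (f y).1)

lemma norm_ker (k x y : ℝ) :
    ‖Complex.exp (-2 * Complex.I * (k : ℂ) * ((y : ℂ) - (x : ℂ)))‖ = 1 := by
  rw [Complex.norm_exp]
  have h : -2 * Complex.I * (k:ℂ) * ((y:ℂ) - (x:ℂ)) = ((-2*k*(y-x) : ℝ) : ℂ) * Complex.I := by
    push_cast; ring
  rw [h, Complex.re_ofReal_mul, Complex.I_re, mul_zero, Real.exp_zero]

lemma norm_ker' (k y : ℝ) : ‖Complex.exp (-2 * Complex.I * (k : ℂ) * (y : ℂ))‖ = 1 := by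
  have := norm_ker k 0 y
  simpa using this

lemma aesm_conj_qneg (hq₀ : Integrable q₀) :
    AEStronglyMeasurable (fun y => (starRingEnd ℂ) (q₀ (-y))) volume := by
  have h := continuous_star.comp_aestronglyMeasurable
    (integrable_qneg hq₀).aestronglyMeasurable
  exact h

lemma integrable_ker (hq₀ : Integrable q₀) (k x : ℝ) :
    Integrable (fun y : ℝ => Complex.exp (-2 * Complex.I * (k : ℂ) * ((y : ℂ) - (x : ℂ))) *
      (starRingEnd ℂ) (q₀ (-y))) := by
  refine Integrable.mono' (integrable_qneg hq₀).norm ?_ ?_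
  · exact (Continuous.aestronglyMeasurable (by continuity)).mul (aesm_conj_qneg hq₀)
  · refine Filter.Eventually.of_forall fun y => ?_
    rw [norm_mul, norm_ker k x y, one_mul, RCLike.norm_conj]

lemma integrable_ker' (hq₀ : Integrable q₀) (k : ℝ) :
    Integrable (fun y : ℝ => Complex.exp (-2 * Complex.I * (k : ℂ) * (y : ℂ)) *
      (starRingEnd ℂ) (q₀ (-y))) := by
  refine Integrable.mono' (integrable_qneg hq₀).norm ?_ ?_
  · exact (Continuous.aestronglyMeasurable (by continuity)).mul (aesm_conj_qneg hq₀)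
  · refine Filter.Eventually.of_forall fun y => ?_
    rw [norm_mul, norm_ker' k y, one_mul, RCLike.norm_conj]

lemma ker_le_QQ (k x y : ℝ) :
    ‖Complex.exp (-2 * Complex.I * (k : ℂ) * ((y : ℂ) - (x : ℂ))) *
      (starRingEnd ℂ) (q₀ (-y))‖ ≤ QQ q₀ y := by
  rw [norm_mul, norm_ker k x y, one_mul, RCLike.norm_conj]
  exact le_add_of_nonneg_left (norm_nonneg _)

lemma q_le_QQ (y : ℝ) : ‖q₀ y‖ ≤ QQ q₀ y := le_add_of_nonneg_right (norm_nonneg _)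

/-- Core integral estimate. -/
lemma norm_setIntegral_mul_le (hq₀ : Integrable q₀) (x : ℝ) {h : ℝ → ℂ} {u : ℝ → ℂ}
    (hhQ : ∀ y, ‖h y‖ ≤ QQ q₀ y)
    {φ : ℝ → ℝ} (hφm : AEStronglyMeasurable φ (volume.restrict (Set.Iic x))) {M : ℝ}
    (hφM : ∀ y ∈ Set.Iic x, |φ y| ≤ M)
    (hu : ∀ y ∈ Set.Iic x, ‖u y‖ ≤ φ y) :
    ‖∫ y in Set.Iic x, h y * u y‖ ≤ ∫ y in Set.Iic x, QQ q₀ y * φ y := by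
  refine (norm_integral_le_integral_norm _).trans ?_
  refine integral_mono_of_nonneg (Filter.Eventually.of_forall fun y => norm_nonneg _) ?_ ?_
  · refine integrableOn_mul_bdd (𝕜 := ℝ) measurableSet_Iic
      (integrable_QQ hq₀).integrableOn hφm (C := M) ?_
    intro y hy
    rw [Real.norm_eq_abs]
    exact hφM y hy
  · refine (ae_restrict_iff' measurableSet_Iic).2 (Filter.Eventually.of_forall fun y hy => ?_)
    show ‖h y * u y‖ ≤ QQ q₀ y * φ y
    rw [norm_mul]
    exact mul_le_mul (hhQ y) (hu y hy) (norm_nonneg _) (QQ_nonneg y)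

lemma norm_neg_sigma {σ : ℝ} (hσ : σ = 1 ∨ σ = -1) : ‖-(σ:ℂ)‖ = 1 := by
  rcases hσ with h | h <;> simp [h]

/-- The main difference estimate for the Picard operator. -/
lemma TT_sub_est (hq₀ : Integrable q₀) {σ : ℝ} (hσ : σ = 1 ∨ σ = -1) (k : ℝ) (x : ℝ)
    {f g : ℝ → ℂ × ℂ}
    (hfm : AEStronglyMeasurable f (volume.restrict (Set.Iic x)))
    (hgm : AEStronglyMeasurable g (volume.restrict (Set.Iic x)))
    {Cf Cg : ℝ} (hfb : ∀ y ∈ Set.Iic x, ‖f y‖ ≤ Cf) (hgb : ∀ y ∈ Set.Iic x, ‖g y‖ ≤ Cg)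
    {φ : ℝ → ℝ} (hφm : AEStronglyMeasurable φ (volume.restrict (Set.Iic x))) {M : ℝ}
    (hφM : ∀ y ∈ Set.Iic x, |φ y| ≤ M)
    (hφ : ∀ y ∈ Set.Iic x, ‖f y - g y‖ ≤ φ y) :
    ‖TT q₀ σ k f x - TT q₀ σ k g x‖ ≤ ∫ y in Set.Iic x, QQ q₀ y * φ y := by
  have hf1 : AEStronglyMeasurable (fun y => (f y).1) (volume.restrict (Set.Iic x)) :=
    continuous_fst.comp_aestronglyMeasurable hfm
  have hf2 : AEStronglyMeasurable (fun y => (f y).2) (volume.restrict (Set.Iic x)) :=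
    continuous_snd.comp_aestronglyMeasurable hfm
  have hg1 : AEStronglyMeasurable (fun y => (g y).1) (volume.restrict (Set.Iic x)) :=
    continuous_fst.comp_aestronglyMeasurable hgm
  have hg2 : AEStronglyMeasurable (fun y => (g y).2) (volume.restrict (Set.Iic x)) :=
    continuous_snd.comp_aestronglyMeasurable hgm
  have hIf2 : IntegrableOn (fun y => q₀ y * (f y).2) (Set.Iic x) :=
    integrableOn_mul_bdd measurableSet_Iic hq₀.integrableOn hf2
      (fun y hy => (norm_snd_le _).trans (hfb y hy))
  have hIg2 : IntegrableOn (fun y => q₀ y * (g y).2) (Set.Iic x) :=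
    integrableOn_mul_bdd measurableSet_Iic hq₀.integrableOn hg2
      (fun y hy => (norm_snd_le _).trans (hgb y hy))
  have hIf1 : IntegrableOn (fun y : ℝ => (Complex.exp (-2 * Complex.I * (k : ℂ) *
      ((y : ℂ) - (x : ℂ))) * (starRingEnd ℂ) (q₀ (-y))) * (f y).1) (Set.Iic x) :=
    integrableOn_mul_bdd measurableSet_Iic (integrable_ker hq₀ k x).integrableOn hf1
      (fun y hy => (norm_fst_le _).trans (hfb y hy))
  have hIg1 : IntegrableOn (fun y : ℝ => (Complex.exp (-2 * Complex.I * (k : ℂ) *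
      ((y : ℂ) - (x : ℂ))) * (starRingEnd ℂ) (q₀ (-y))) * (g y).1) (Set.Iic x) :=
    integrableOn_mul_bdd measurableSet_Iic (integrable_ker hq₀ k x).integrableOn hg1
      (fun y hy => (norm_fst_le _).trans (hgb y hy))
  have hc1 : (TT q₀ σ k f x - TT q₀ σ k g x).1
      = ∫ y in Set.Iic x, q₀ y * ((f y).2 - (g y).2) := by
    have hs : (∫ y in Set.Iic x, q₀ y * ((f y).2 - (g y).2))
        = (∫ y in Set.Iic x, q₀ y * (f y).2) - ∫ y in Set.Iic x, q₀ y * (g y).2 := by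
      rw [← integral_sub hIf2 hIg2]
      exact integral_congr_ae (Filter.Eventually.of_forall fun y => by ring)
    show (1 + ∫ y in Set.Iic x, q₀ y * (f y).2) - (1 + ∫ y in Set.Iic x, q₀ y * (g y).2) = _
    rw [hs]
    ring
  have hc2 : (TT q₀ σ k f x - TT q₀ σ k g x).2
      = -(σ:ℂ) * ∫ y in Set.Iic x, (Complex.exp (-2 * Complex.I * (k : ℂ) *
          ((y : ℂ) - (x : ℂ))) * (starRingEnd ℂ) (q₀ (-y))) * ((f y).1 - (g y).1) := by
    have hs : (∫ y in Set.Iic x, (Complex.exp (-2 * Complex.I * (k : ℂ) *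
          ((y : ℂ) - (x : ℂ))) * (starRingEnd ℂ) (q₀ (-y))) * ((f y).1 - (g y).1))
        = (∫ y in Set.Iic x, Complex.exp (-2 * Complex.I * (k : ℂ) *
            ((y : ℂ) - (x : ℂ))) * (starRingEnd ℂ) (q₀ (-y)) * (f y).1)
          - ∫ y in Set.Iic x, Complex.exp (-2 * Complex.I * (k : ℂ) *
            ((y : ℂ) - (x : ℂ))) * (starRingEnd ℂ) (q₀ (-y)) * (g y).1 := by
      rw [← integral_sub hIf1 hIg1]
      exact integral_congr_ae (Filter.Eventually.of_forall fun y => by ring)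
    show (-(σ:ℂ) * _) - (-(σ:ℂ) * _) = _
    rw [hs]
    ring
  rw [Prod.norm_def, hc1, hc2]
  refine max_le ?_ ?_
  · refine norm_setIntegral_mul_le hq₀ x (fun y => q_le_QQ y) hφm hφM ?_
    intro y hy
    calc ‖(f y).2 - (g y).2‖ = ‖(f y - g y).2‖ := by rw [Prod.snd_sub]
      _ ≤ ‖f y - g y‖ := norm_snd_le _
      _ ≤ φ y := hφ y hy
  · rw [norm_mul, norm_neg_sigma hσ, one_mul]
    refine norm_setIntegral_mul_le hq₀ x (fun y => ker_le_QQ k x y) hφm hφM ?_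
    intro y hy
    calc ‖(f y).1 - (g y).1‖ = ‖(f y - g y).1‖ := by rw [Prod.fst_sub]
      _ ≤ ‖f y - g y‖ := norm_fst_le _
      _ ≤ φ y := hφ y hy


lemma TT_zero (σ k : ℝ) (x : ℝ) :
    TT q₀ σ k (fun _ => (0 : ℂ × ℂ)) x = ((1 : ℂ), (0 : ℂ)) := by
  simp [TT]

lemma TT_bdd (hq₀ : Integrable q₀) {σ : ℝ} (hσ : σ = 1 ∨ σ = -1) (k x : ℝ) {f : ℝ → ℂ × ℂ}
    (hfm : AEStronglyMeasurable f (volume.restrict (Set.Iic x))) {C : ℝ} (hC : 0 ≤ C)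
    (hfb : ∀ y ∈ Set.Iic x, ‖f y‖ ≤ C) :
    ‖TT q₀ σ k f x‖ ≤ 1 + (∫ y, QQ q₀ y) * C := by
  have hsub := TT_sub_est hq₀ hσ k x (g := fun _ => (0 : ℂ × ℂ)) hfm
    aestronglyMeasurable_const (Cf := C) hfb
    (Cg := 0) (fun y _ => by simp) (φ := fun _ => C)
    aestronglyMeasurable_const (M := C) (fun y _ => by rw [abs_of_nonneg hC])
    (fun y hy => by simpa using hfb y hy)
  have h1 : (∫ y in Set.Iic x, QQ q₀ y * C) = WW q₀ x * C := integral_mul_const _ _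
  have h2 : WW q₀ x * C ≤ (∫ y, QQ q₀ y) * C :=
    mul_le_mul_of_nonneg_right (WW_le_total hq₀ x) hC
  have h3 : ‖TT q₀ σ k (fun _ => (0 : ℂ × ℂ)) x‖ = 1 := by
    rw [TT_zero]
    simp [Prod.norm_def]
  have h4 := norm_sub_norm_le (TT q₀ σ k f x) (TT q₀ σ k (fun _ => (0 : ℂ × ℂ)) x)
  rw [h3] at h4
  rw [h1] at hsub
  linarith

lemma TT_cont (hq₀ : Integrable q₀) (σ k : ℝ) {f : ℝ → ℂ × ℂ}
    (hfm : AEStronglyMeasurable f volume) {C : ℝ} (hfb : ∀ y, ‖f y‖ ≤ C) :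
    Continuous (TT q₀ σ k f) := by
  have hf1 : AEStronglyMeasurable (fun y => (f y).1) volume :=
    continuous_fst.comp_aestronglyMeasurable hfm
  have hf2 : AEStronglyMeasurable (fun y => (f y).2) volume :=
    continuous_snd.comp_aestronglyMeasurable hfm
  have hI2 : Integrable (fun y => q₀ y * (f y).2) := by
    rw [← integrableOn_univ]
    exact integrableOn_mul_bdd MeasurableSet.univ hq₀.integrableOn hf2.restrict
      (fun y _ => (norm_snd_le _).trans (hfb y))
  have hc1 : Continuous fun x => 1 + ∫ y in Set.Iic x, q₀ y * (f y).2 :=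
    continuous_const.add (continuous_integral_Iic hI2)
  have hI1 : Integrable (fun y : ℝ => Complex.exp (-2 * Complex.I * (k:ℂ) * (y:ℂ)) *
      (starRingEnd ℂ) (q₀ (-y)) * (f y).1) := by
    rw [← integrableOn_univ]
    exact integrableOn_mul_bdd MeasurableSet.univ (integrable_ker' hq₀ k).integrableOn
      hf1.restrict (fun y _ => (norm_fst_le _).trans (hfb y))
  have hrw : (fun x : ℝ => -(σ:ℂ) * ∫ y in Set.Iic x, Complex.exp (-2 * Complex.I * (k:ℂ) *
        ((y:ℂ) - (x:ℂ))) * (starRingEnd ℂ) (q₀ (-y)) * (f y).1)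
      = fun x : ℝ => -(σ:ℂ) * (Complex.exp (2 * Complex.I * (k:ℂ) * (x:ℂ)) *
        ∫ y in Set.Iic x, Complex.exp (-2 * Complex.I * (k:ℂ) * (y:ℂ)) *
          (starRingEnd ℂ) (q₀ (-y)) * (f y).1) := by
    funext x
    congr 1
    rw [← integral_const_mul]
    refine integral_congr_ae (Filter.Eventually.of_forall fun y => ?_)
    show Complex.exp (-2 * Complex.I * (k:ℂ) * ((y:ℂ) - (x:ℂ))) *
        (starRingEnd ℂ) (q₀ (-y)) * (f y).1
      = Complex.exp (2 * Complex.I * (k:ℂ) * (x:ℂ)) *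
        (Complex.exp (-2 * Complex.I * (k:ℂ) * (y:ℂ)) * (starRingEnd ℂ) (q₀ (-y)) * (f y).1)
    have he : Complex.exp (-2 * Complex.I * (k:ℂ) * ((y:ℂ) - (x:ℂ)))
        = Complex.exp (2 * Complex.I * (k:ℂ) * (x:ℂ)) *
          Complex.exp (-2 * Complex.I * (k:ℂ) * (y:ℂ)) := by
      rw [← Complex.exp_add]
      congr 1
      ring
    rw [he]
    ring
  have hc2 : Continuous fun x : ℝ => -(σ:ℂ) * ∫ y in Set.Iic x, Complex.exp (-2 * Complex.I *
      (k:ℂ) * ((y:ℂ) - (x:ℂ))) * (starRingEnd ℂ) (q₀ (-y)) * (f y).1 := by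
    rw [hrw]
    refine continuous_const.mul (Continuous.mul ?_ (continuous_integral_Iic hI1))
    exact Complex.continuous_exp.comp (continuous_const.mul Complex.continuous_ofReal)
  exact hc1.prodMk hc2

/-! ## The Picard iterates -/

noncomputable def FF (q₀ : ℝ → ℂ) (σ k : ℝ) : ℕ → ℝ → ℂ × ℂ
  | 0 => fun _ => (1, 0)
  | n+1 => TT q₀ σ k (FF q₀ σ k n)

lemma FF_props (hq₀ : Integrable q₀) {σ : ℝ} (hσ : σ = 1 ∨ σ = -1) (k : ℝ) (n : ℕ) :
    Continuous (FF q₀ σ k n) ∧ ∃ C, 0 ≤ C ∧ ∀ x, ‖FF q₀ σ k n x‖ ≤ C := by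
  induction n with
  | zero =>
    refine ⟨continuous_const, 1, zero_le_one, fun x => ?_⟩
    show ‖((1:ℂ), (0:ℂ))‖ ≤ 1
    simp [Prod.norm_def]
  | succ n ih =>
    obtain ⟨hc, C, hC0, hCb⟩ := ih
    have hQint : (0:ℝ) ≤ ∫ y, QQ q₀ y := integral_nonneg (fun y => QQ_nonneg y)
    refine ⟨TT_cont hq₀ σ k hc.aestronglyMeasurable hCb, 1 + (∫ y, QQ q₀ y) * C, ?_, fun x =>
      TT_bdd hq₀ hσ k x hc.aestronglyMeasurable.restrict hC0 (fun y _ => hCb y)⟩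
    nlinarith

lemma FF_diff (hq₀ : Integrable q₀) {σ : ℝ} (hσ : σ = 1 ∨ σ = -1) (k : ℝ) :
    ∀ n x, ‖FF q₀ σ k (n+1) x - FF q₀ σ k n x‖
      ≤ WW q₀ x ^ (n+1) / (Nat.factorial (n+1) : ℝ) := by
  intro n
  induction n with
  | zero =>
    intro x
    have e : FF q₀ σ k 1 x - FF q₀ σ k 0 x
        = ((0:ℂ), -(σ:ℂ) * ∫ y in Set.Iic x, Complex.exp (-2 * Complex.I * (k:ℂ) *
            ((y:ℂ) - (x:ℂ))) * (starRingEnd ℂ) (q₀ (-y))) := by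
      show TT q₀ σ k (FF q₀ σ k 0) x - ((1:ℂ), (0:ℂ)) = _
      have h1 : (TT q₀ σ k (FF q₀ σ k 0) x).1 = 1 := by
        show 1 + (∫ y in Set.Iic x, q₀ y * ((1:ℂ), (0:ℂ)).2) = 1
        simp
      have h2 : (TT q₀ σ k (FF q₀ σ k 0) x).2
          = -(σ:ℂ) * ∫ y in Set.Iic x, Complex.exp (-2 * Complex.I * (k:ℂ) *
              ((y:ℂ) - (x:ℂ))) * (starRingEnd ℂ) (q₀ (-y)) := by
        show -(σ:ℂ) * (∫ y in Set.Iic x, Complex.exp (-2 * Complex.I * (k:ℂ) *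
            ((y:ℂ) - (x:ℂ))) * (starRingEnd ℂ) (q₀ (-y)) * ((1:ℂ), (0:ℂ)).1) = _
        congr 1
        exact integral_congr_ae (Filter.Eventually.of_forall fun y => by simp)
      refine Prod.ext ?_ ?_
      · rw [Prod.fst_sub, h1]; simp
      · rw [Prod.snd_sub, h2]; simp
    rw [e, Prod.norm_def]
    have hnorm : ‖-(σ:ℂ) * ∫ y in Set.Iic x, Complex.exp (-2 * Complex.I * (k:ℂ) *
        ((y:ℂ) - (x:ℂ))) * (starRingEnd ℂ) (q₀ (-y))‖ ≤ WW q₀ x := by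
      rw [norm_mul, norm_neg_sigma hσ, one_mul]
      refine (norm_integral_le_integral_norm _).trans ?_
      refine integral_mono_of_nonneg (Filter.Eventually.of_forall fun y => norm_nonneg _)
        (integrable_QQ hq₀).integrableOn ?_
      exact Filter.Eventually.of_forall fun y => ker_le_QQ k x y
    have hW0 : (0:ℝ) ≤ WW q₀ x := WW_nonneg hq₀ x
    simp only [norm_zero]
    rw [max_eq_right (norm_nonneg _)]
    refine hnorm.trans (le_of_eq ?_)
    simp [Nat.factorial]
  | succ n ih =>
    intro x
    obtain ⟨hcn, Cn, hCn0, hCnb⟩ := FF_props hq₀ hσ k n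
    obtain ⟨hcn1, Cn1, hCn10, hCn1b⟩ := FF_props hq₀ hσ k (n+1)
    have hfac : (0:ℝ) < (Nat.factorial (n+1) : ℝ) := by
      exact_mod_cast Nat.factorial_pos (n+1)
    have hest := TT_sub_est hq₀ hσ k x
      hcn1.aestronglyMeasurable.restrict hcn.aestronglyMeasurable.restrict
      (Cf := Cn1) (fun y _ => hCn1b y) (Cg := Cn) (fun y _ => hCnb y)
      (φ := fun y => WW q₀ y ^ (n+1) / (Nat.factorial (n+1) : ℝ))
      ((((WW_cont hq₀).pow (n+1)).div_const _).aestronglyMeasurable.restrict)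
      (M := (∫ y, QQ q₀ y) ^ (n+1) / (Nat.factorial (n+1) : ℝ)) ?_ (fun y _ => ih y)
    · refine hest.trans ?_
      have hcongr : (∫ y in Set.Iic x, QQ q₀ y *
            (WW q₀ y ^ (n+1) / (Nat.factorial (n+1) : ℝ)))
          = (∫ y in Set.Iic x, QQ q₀ y * WW q₀ y ^ (n+1)) * (1/(Nat.factorial (n+1) : ℝ)) := by
        rw [← integral_mul_const]
        exact integral_congr_ae (Filter.Eventually.of_forall fun y => by ring)
      rw [hcongr]
      have hkey := key hq₀ (n+1) x
      have hstep : (∫ y in Set.Iic x, QQ q₀ y * WW q₀ y ^ (n+1)) * (1/(Nat.factorial (n+1) : ℝ))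
          ≤ (WW q₀ x ^ (n+1+1) / ((n:ℝ)+1+1)) * (1/(Nat.factorial (n+1) : ℝ)) := by
        refine mul_le_mul_of_nonneg_right ?_ (by positivity)
        refine hkey.trans (le_of_eq ?_)
        push_cast
        rfl
      refine hstep.trans (le_of_eq ?_)
      have hden : ((n:ℝ)+1+1) * ((Nat.factorial (n+1)):ℝ) = ((Nat.factorial (n+1+1)):ℝ) := by
        rw [Nat.factorial_succ (n+1)]
        push_cast
        ring
      rw [div_mul_div_comm, mul_one, hden]
    · intro y _
      have h0 := WW_nonneg hq₀ y
      rw [abs_of_nonneg (by positivity), div_le_div_iff_of_pos_right hfac]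
      exact pow_le_pow_left₀ h0 (WW_le_total hq₀ y) (n+1)


lemma FF_norm_le (hq₀ : Integrable q₀) {σ : ℝ} (hσ : σ = 1 ∨ σ = -1) (k : ℝ) :
    ∀ n x, ‖FF q₀ σ k n x‖
      ≤ ∑ i ∈ Finset.range (n+1), WW q₀ x ^ i / (Nat.factorial i : ℝ) := by
  intro n
  induction n with
  | zero =>
    intro x
    show ‖((1:ℂ), (0:ℂ))‖ ≤ _
    simp [Prod.norm_def, Nat.factorial]
  | succ n ih =>
    intro x
    have h1 := norm_sub_norm_le (FF q₀ σ k (n+1) x) (FF q₀ σ k n x)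
    have h2 := FF_diff hq₀ hσ k n x
    have h3 := ih x
    rw [Finset.sum_range_succ]
    linarith

lemma FF_norm_exp (hq₀ : Integrable q₀) {σ : ℝ} (hσ : σ = 1 ∨ σ = -1) (k : ℝ) (n : ℕ) (x : ℝ) :
    ‖FF q₀ σ k n x‖ ≤ Real.exp (WW q₀ x) :=
  (FF_norm_le hq₀ hσ k n x).trans (Real.sum_le_exp_of_nonneg (WW_nonneg hq₀ x) (n+1))

/-- Existence of the continuous fixed point of the Picard operator. -/
lemma exists_sol (hq₀ : Integrable q₀) {σ : ℝ} (hσ : σ = 1 ∨ σ = -1) (k : ℝ) :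
    ∃ f : ℝ → ℂ × ℂ, Continuous f ∧ (∀ x, f x = TT q₀ σ k f x) ∧
      (∀ x, ‖f x‖ ≤ Real.exp (WW q₀ x)) := by
  set Wtot := ∫ y, QQ q₀ y with hWtot
  have hW0 : 0 ≤ Wtot := integral_nonneg fun y => QQ_nonneg y
  set u : ℕ → ℝ := fun n => Wtot ^ (n+1) / (Nat.factorial (n+1) : ℝ) with hu
  have hsum : Summable u := by
    have := Real.summable_pow_div_factorial Wtot
    exact (summable_nat_add_iff 1).2 this
  have hdistFF : ∀ x n, dist (FF q₀ σ k n x) (FF q₀ σ k (n+1) x) ≤ u n := by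
    intro x n
    rw [dist_eq_norm, norm_sub_rev]
    refine (FF_diff hq₀ hσ k n x).trans ?_
    have hfac : (0:ℝ) < (Nat.factorial (n+1) : ℝ) := by
      exact_mod_cast Nat.factorial_pos (n+1)
    rw [div_le_div_iff_of_pos_right hfac]
    exact pow_le_pow_left₀ (WW_nonneg hq₀ x) (WW_le_total hq₀ x) (n+1)
  have hcau : ∀ x, CauchySeq (fun n => FF q₀ σ k n x) :=
    fun x => cauchySeq_of_dist_le_of_summable u (hdistFF x) hsum
  set f : ℝ → ℂ × ℂ := fun x => limUnder atTop (fun n => FF q₀ σ k n x) with hf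
  have htend : ∀ x, Tendsto (fun n => FF q₀ σ k n x) atTop (nhds (f x)) :=
    fun x => (hcau x).tendsto_limUnder
  set r : ℕ → ℝ := fun n => ∑' m, u (n + m) with hrdef
  have hrn : ∀ x n, dist (FF q₀ σ k n x) (f x) ≤ r n :=
    fun x n => dist_le_tsum_of_dist_le_of_tendsto u (hdistFF x) hsum (htend x) n
  have hr0 : Tendsto r atTop (nhds 0) := by
    have h := tendsto_sum_nat_add u
    refine h.congr fun n => ?_
    exact tsum_congr fun m => by rw [add_comm]
  have hrnonneg : ∀ n, 0 ≤ r n := by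
    intro n
    refine tsum_nonneg fun m => ?_
    have : (0:ℝ) < (Nat.factorial (n+m+1) : ℝ) := by
      exact_mod_cast Nat.factorial_pos (n+m+1)
    positivity
  have hbnd : ∀ x, ‖f x‖ ≤ Real.exp (WW q₀ x) := by
    intro x
    refine le_of_tendsto (htend x).norm ?_
    exact Filter.Eventually.of_forall fun n => FF_norm_exp hq₀ hσ k n x
  have hcontf : Continuous f := by
    have huni : TendstoUniformly (fun n x => FF q₀ σ k n x) f atTop := by
      rw [Metric.tendstoUniformly_iff]
      intro ε hε
      have hev : ∀ᶠ n in atTop, r n < ε := hr0.eventually_lt_const hε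
      filter_upwards [hev] with n hn x
      calc dist (f x) (FF q₀ σ k n x) = dist (FF q₀ σ k n x) (f x) := dist_comm _ _
        _ ≤ r n := hrn x n
        _ < ε := hn
    exact huni.continuous (Filter.Eventually.of_forall fun n => (FF_props hq₀ hσ k n).1).frequently
  have hfix : ∀ x, f x = TT q₀ σ k f x := by
    intro x
    have h1 : Tendsto (fun n => FF q₀ σ k (n+1) x) atTop (nhds (f x)) :=
      (htend x).comp (tendsto_add_atTop_nat 1)
    have h2 : Tendsto (fun n => FF q₀ σ k (n+1) x) atTop (nhds (TT q₀ σ k f x)) := by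
      rw [tendsto_iff_dist_tendsto_zero]
      have hb : ∀ n, dist (FF q₀ σ k (n+1) x) (TT q₀ σ k f x) ≤ Wtot * r n := by
        intro n
        obtain ⟨hcn, Cn, hCn0, hCnb⟩ := FF_props hq₀ hσ k n
        rw [dist_eq_norm]
        have hest := TT_sub_est hq₀ hσ k x
          hcn.aestronglyMeasurable.restrict hcontf.aestronglyMeasurable.restrict
          (Cf := Cn) (fun y _ => hCnb y)
          (Cg := Real.exp Wtot) (fun y _ => (hbnd y).trans
            (Real.exp_le_exp.2 (WW_le_total hq₀ y)))
          (φ := fun _ => r n) aestronglyMeasurable_const (M := r n)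
          (fun y _ => by rw [abs_of_nonneg (hrnonneg n)])
          (fun y _ => by rw [← dist_eq_norm]; exact hrn y n)
        refine hest.trans ?_
        have : (∫ y in Set.Iic x, QQ q₀ y * r n) = WW q₀ x * r n := integral_mul_const _ _
        rw [this]
        exact mul_le_mul_of_nonneg_right (WW_le_total hq₀ x) (hrnonneg n)
      refine squeeze_zero (fun n => dist_nonneg) hb ?_
      simpa using hr0.const_mul Wtot
    exact tendsto_nhds_unique h1 h2
  exact ⟨f, hcontf, hfix, hbnd⟩

end JostAux1



/-- For every `q₀ ∈ L¹(ℝ)`, `σ ∈ {1,-1}` and `k ∈ ℝ`, the left Jost system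
has exactly one bounded measurable solution `f = (f₁, f₂)` on `(-∞, 0]`; this solution is
continuous and satisfies `max (|f₁ x|) (|f₂ x|) ≤ exp ‖q₀‖_{L¹}` for every `x ≤ 0`. -/
theorem statement1 (q₀ : ℝ → ℂ) (hq₀ : Integrable q₀)
    (σ : ℝ) (hσ : σ = 1 ∨ σ = -1) (k : ℝ) :
    ∃ f : ℝ → ℂ × ℂ,
      (BddMeasOn (Set.Iic 0) f ∧ LeftJost1 q₀ σ k f) ∧
      (∀ g : ℝ → ℂ × ℂ, BddMeasOn (Set.Iic 0) g → LeftJost1 q₀ σ k g →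
        ∀ x ≤ (0:ℝ), g x = f x) ∧
      ContinuousOn f (Set.Iic 0) ∧
      (∀ x ≤ (0:ℝ), max ‖(f x).1‖ ‖(f x).2‖ ≤ Real.exp (∫ y : ℝ, ‖q₀ y‖)) := by
  classical
  obtain ⟨f, hcontf, hfix, hbnd⟩ := JostAux1.exists_sol hq₀ hσ k
  have hW00 : JostAux1.WW q₀ 0 = ∫ y, ‖q₀ y‖ := JostAux1.WW_zero hq₀
  have hWmono := JostAux1.WW_mono hq₀
  have hbnd0 : ∀ x ≤ (0:ℝ), ‖f x‖ ≤ Real.exp (∫ y, ‖q₀ y‖) := by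
    intro x hx
    refine (hbnd x).trans ?_
    rw [← hW00]
    exact Real.exp_le_exp.2 (hWmono hx)
  refine ⟨f, ⟨⟨(hcontf.comp continuous_subtype_val).measurable, Real.exp (∫ y, ‖q₀ y‖),
      fun x hx => hbnd0 x hx⟩, ?_⟩, ?_, hcontf.continuousOn, ?_⟩
  · intro x _
    exact ⟨congrArg Prod.fst (hfix x), congrArg Prod.snd (hfix x)⟩
  · intro g hg hgJ x hx
    obtain ⟨hgmeas, Cg, hgbd⟩ := hg
    have hgm : AEStronglyMeasurable g (volume.restrict (Set.Iic (0:ℝ))) := by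
      have hs : MeasurableSet (Set.Iic (0:ℝ)) := measurableSet_Iic
      rw [← map_comap_subtype_coe hs volume]
      exact ((MeasurableEmbedding.subtype_coe hs).aemeasurable_map_iff.2
        hgmeas.aemeasurable).aestronglyMeasurable
    have hgfix : ∀ z, z ≤ (0:ℝ) → g z = JostAux1.TT q₀ σ k g z := by
      intro z hz
      exact Prod.ext (hgJ z hz).1 (hgJ z hz).2
    set Ef := Real.exp (JostAux1.WW q₀ 0) with hEf
    have hCg0 : 0 ≤ Cg := le_trans (norm_nonneg (g 0)) (hgbd 0 (Set.mem_Iic.2 le_rfl))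
    set D := Cg + Ef with hD
    have hD0 : 0 ≤ D := add_nonneg hCg0 (Real.exp_pos _).le
    have claim : ∀ n : ℕ, ∀ z, z ≤ (0:ℝ) →
        ‖g z - f z‖ ≤ D * JostAux1.WW q₀ z ^ n / (Nat.factorial n : ℝ) := by
      intro n
      induction n with
      | zero =>
        intro z hz
        simp only [pow_zero, Nat.factorial_zero, Nat.cast_one, mul_one, div_one]
        refine (norm_sub_le _ _).trans ?_
        have h1 := hgbd z hz
        have h2 : ‖f z‖ ≤ Ef := (hbnd z).trans (Real.exp_le_exp.2 (hWmono hz))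
        rw [hD]; linarith
      | succ n ih =>
        intro z hz
        rw [hgfix z hz, hfix z]
        have hfac : (0:ℝ) < (Nat.factorial n : ℝ) := by exact_mod_cast Nat.factorial_pos n
        have hgm' : AEStronglyMeasurable g (volume.restrict (Set.Iic z)) :=
          hgm.mono_measure (Measure.restrict_mono (Set.Iic_subset_Iic.2 hz) le_rfl)
        have hest := JostAux1.TT_sub_est hq₀ hσ k z hgm'
          hcontf.aestronglyMeasurable.restrict
          (Cf := Cg) (fun y hy => hgbd y (le_trans hy hz))
          (Cg := Ef) (fun y hy => (hbnd y).trans (Real.exp_le_exp.2 (hWmono (le_trans hy hz))))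
          (φ := fun y => D * JostAux1.WW q₀ y ^ n / (Nat.factorial n : ℝ))
          ((continuous_const.mul ((JostAux1.WW_cont hq₀).pow n)).div_const
            _).aestronglyMeasurable.restrict
          (M := D * JostAux1.WW q₀ 0 ^ n / (Nat.factorial n : ℝ))
          ?_ (fun y hy => ih y (le_trans hy hz))
        · refine hest.trans ?_
          have hcongr : (∫ y in Set.Iic z, JostAux1.QQ q₀ y *
                (D * JostAux1.WW q₀ y ^ n / (Nat.factorial n : ℝ)))
              = (∫ y in Set.Iic z, JostAux1.QQ q₀ y * JostAux1.WW q₀ y ^ n)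
                * (D / (Nat.factorial n : ℝ)) := by
            rw [← integral_mul_const]
            exact integral_congr_ae (Filter.Eventually.of_forall fun y => by ring)
          rw [hcongr]
          have hkey := JostAux1.key hq₀ n z
          calc (∫ y in Set.Iic z, JostAux1.QQ q₀ y * JostAux1.WW q₀ y ^ n)
                * (D / (Nat.factorial n : ℝ))
              ≤ (JostAux1.WW q₀ z ^ (n+1) / ((n:ℝ)+1)) * (D / (Nat.factorial n : ℝ)) := by
                refine mul_le_mul_of_nonneg_right hkey (by positivity)
            _ = D * JostAux1.WW q₀ z ^ (n+1) / (Nat.factorial (n+1) : ℝ) := by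
                rw [Nat.factorial_succ]
                push_cast
                field_simp
        · intro y hy
          have h0 := JostAux1.WW_nonneg hq₀ y
          have hmono := hWmono (le_trans hy hz)
          rw [abs_of_nonneg (div_nonneg (mul_nonneg hD0 (pow_nonneg h0 n)) hfac.le),
            div_le_div_iff_of_pos_right hfac]
          exact mul_le_mul_of_nonneg_left (pow_le_pow_left₀ h0 hmono n) hD0
    have hlim : Filter.Tendsto (fun n : ℕ => D * JostAux1.WW q₀ x ^ n / (Nat.factorial n : ℝ))
        Filter.atTop (nhds 0) := by
      have h := (Real.summable_pow_div_factorial (JostAux1.WW q₀ x)).tendsto_atTop_zero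
      have h2 := h.const_mul D
      simpa [mul_div_assoc] using h2
    have hzero : ‖g x - f x‖ ≤ 0 :=
      ge_of_tendsto hlim (Filter.Eventually.of_forall fun n => claim n x hx)
    exact sub_eq_zero.1 (norm_le_zero_iff.1 hzero)
  · intro x hx
    have h := hbnd0 x hx
    rw [Prod.norm_def] at h
    exact h
end

section
/- Let q₀ ∈ L¹(ℝ), σ ∈ {1, −1}, k ∈ ℝ, and set Q(y) = [[0, q₀(y)], [−σ conj(q₀(−y)), 0]] and Λ = [[0, σ], [1, 0]]. If Ψ : ℝ → M₂(ℂ) is a bounded measurable function satisfying Ψ(x) = I + ∫_{−∞}^x e^{−ik(y−x)σ₃} Q(y) Ψ(y) e^{ik(y−x)σ₃} dy for all x ∈ ℝ (the left Jost integral equation with spectral parameter −k), then the function Φ(x) := Λ · conj(Ψ(−x)) · Λ^{−1} satisfies Φ(x) = I − ∫_x^{∞} e^{ik(y−x)σ₃} Q(y) Φ(y) e^{−ik(y−x)σ₃} dy for all x ∈ ℝ (the right Jost integral equation with spectral parameter k). -/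
/-!
The map `T M = Λ conj(M) Λ⁻¹` is multiplicative, fixes `I`, sends `e^{zσ₃}` to
`e^{-conj(z) σ₃}` and `Q(-y)` to `-Q(y)` (because `σ² = 1`). Applying `T` to the left
equation at `-x` and substituting `y ↦ -y` therefore turns its integrand into minus the
integrand of the right equation at `x`. Entrywise, `T` only permutes, conjugates and scales
by real constants, and these operations commute with the integral.
-/

open MeasureTheory Matrix

/-- `e^{z σ₃} = diag(e^z, e^{-z})`, where `σ₃ = diag(1, -1)` is the third Pauli matrix. -/
noncomputable def pauliExpZ (z : ℂ) : Matrix (Fin 2) (Fin 2) ℂ :=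
  !![Complex.exp z, 0; 0, Complex.exp (-z)]

/-- The potential matrix `Q(y) = [[0, q₀(y)], [-σ conj(q₀(-y)), 0]]`. -/
noncomputable def potQ (q₀ : ℝ → ℂ) (σ : ℝ) (y : ℝ) : Matrix (Fin 2) (Fin 2) ℂ :=
  !![0, q₀ y; -(σ : ℂ) * (starRingEnd ℂ) (q₀ (-y)), 0]

/-- `Λ = [[0, σ], [1, 0]]`. -/
noncomputable def lambdaM (σ : ℝ) : Matrix (Fin 2) (Fin 2) ℂ :=
  !![0, (σ : ℂ); 1, 0]

/-- `Φ(x) = Λ ⬝ conj(Ψ(-x)) ⬝ Λ⁻¹` (entrywise complex conjugation). -/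
noncomputable def symmPhi (σ : ℝ) (Ψ : ℝ → Matrix (Fin 2) (Fin 2) ℂ) (x : ℝ) :
    Matrix (Fin 2) (Fin 2) ℂ :=
  lambdaM σ * (Ψ (-x)).map (fun z => (starRingEnd ℂ) z) * (lambdaM σ)⁻¹

noncomputable def lambdaConj (σ : ℝ) (M : Matrix (Fin 2) (Fin 2) ℂ) : Matrix (Fin 2) (Fin 2) ℂ :=
  lambdaM σ * M.map (starRingEnd ℂ) * (lambdaM σ)⁻¹

section LambdaConj

variable {σ : ℝ}

lemma lambdaM_inv (hσ : (σ : ℂ) * σ = 1) : (lambdaM σ)⁻¹ = !![0, 1; (σ : ℂ), 0] :=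
  Matrix.inv_eq_right_inv <| by simp [lambdaM, hσ, Matrix.one_fin_two]

lemma lambdaConj_eq (hσ : (σ : ℂ) * σ = 1) (M : Matrix (Fin 2) (Fin 2) ℂ) :
    lambdaConj σ M =
      !![(starRingEnd ℂ) (M 1 1), σ * (starRingEnd ℂ) (M 1 0);
         σ * (starRingEnd ℂ) (M 0 1), (starRingEnd ℂ) (M 0 0)] := by
  rw [lambdaConj, lambdaM_inv hσ, lambdaM]
  ext i j
  fin_cases i <;> fin_cases j <;>
    simp [Matrix.mul_apply, Fin.sum_univ_two, Matrix.vecMul, dotProduct, mul_comm, ← mul_assoc,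
      hσ]

lemma lambdaConj_one (hσ : (σ : ℂ) * σ = 1) : lambdaConj σ 1 = 1 := by
  rw [lambdaConj_eq hσ, Matrix.one_fin_two]
  simp

lemma lambdaConj_mul (hσ : (σ : ℂ) * σ = 1) (A B : Matrix (Fin 2) (Fin 2) ℂ) :
    lambdaConj σ (A * B) = lambdaConj σ A * lambdaConj σ B := by
  have hdet : IsUnit (lambdaM σ).det := by
    simpa [lambdaM, Matrix.det_fin_two] using left_ne_zero_of_mul_eq_one hσ
  simp only [lambdaConj, Matrix.map_mul, Matrix.mul_assoc,
    Matrix.nonsing_inv_mul_cancel_left _ _ hdet]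

lemma lambdaConj_pauliExpZ (hσ : (σ : ℂ) * σ = 1) (z : ℂ) :
    lambdaConj σ (pauliExpZ z) = pauliExpZ (-(starRingEnd ℂ) z) := by
  rw [lambdaConj_eq hσ, pauliExpZ, pauliExpZ]
  simp [← Complex.exp_conj]

lemma lambdaConj_potQ_neg (hσ : (σ : ℂ) * σ = 1) (q₀ : ℝ → ℂ) (y : ℝ) :
    lambdaConj σ (potQ q₀ σ (-y)) = -potQ q₀ σ y := by
  rw [lambdaConj_eq hσ, potQ, potQ]
  ext i j
  fin_cases i <;> fin_cases j <;> simp [← mul_assoc, hσ]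

lemma lambdaConj_apply_of_eq_add_integral {α : Type*} [MeasurableSpace α] {μ : Measure α}
    (hσ : (σ : ℂ) * σ = 1) {A B : Matrix (Fin 2) (Fin 2) ℂ} {F : α → Matrix (Fin 2) (Fin 2) ℂ}
    (h : ∀ i j, A i j = B i j + ∫ a, F a i j ∂μ) (i j : Fin 2) :
    lambdaConj σ A i j = lambdaConj σ B i j + ∫ a, lambdaConj σ (F a) i j ∂μ := by
  simp only [lambdaConj_eq hσ]
  fin_cases i <;> fin_cases j <;> simp [h, integral_conj, integral_const_mul, mul_add]

lemma symmPhi_eq_lambdaConj (Ψ : ℝ → Matrix (Fin 2) (Fin 2) ℂ) (x : ℝ) :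
    symmPhi σ Ψ x = lambdaConj σ (Ψ (-x)) := rfl

end LambdaConj

lemma setIntegral_Iic_neg {E : Type*} [NormedAddCommGroup E] [NormedSpace ℝ E]
    (c : ℝ) (f : ℝ → E) : ∫ y in Set.Iic (-c), f y = ∫ y in Set.Ici c, f (-y) := by
  rw [integral_Ici_eq_integral_Ioi, integral_comp_neg_Ioi]

theorem statement2_general (q₀ : ℝ → ℂ)
    (σ : ℝ) (hσ : σ = 1 ∨ σ = -1) (k : ℝ)
    (Ψ : ℝ → Matrix (Fin 2) (Fin 2) ℂ)
    (hΨ : ∀ (x : ℝ) (i j : Fin 2),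
      Ψ x i j = (1 : Matrix (Fin 2) (Fin 2) ℂ) i j +
        ∫ y in Set.Iic x,
          (pauliExpZ (-Complex.I * (k : ℂ) * ((y : ℂ) - (x : ℂ))) * potQ q₀ σ y * Ψ y *
            pauliExpZ (Complex.I * (k : ℂ) * ((y : ℂ) - (x : ℂ)))) i j) :
    ∀ (x : ℝ) (i j : Fin 2),
      symmPhi σ Ψ x i j = (1 : Matrix (Fin 2) (Fin 2) ℂ) i j -
        ∫ y in Set.Ici x,
          (pauliExpZ (Complex.I * (k : ℂ) * ((y : ℂ) - (x : ℂ))) * potQ q₀ σ y *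
            symmPhi σ Ψ y *
            pauliExpZ (-Complex.I * (k : ℂ) * ((y : ℂ) - (x : ℂ)))) i j := by
  intro x i j
  have hσ' : (σ : ℂ) * σ = 1 := by rcases hσ with rfl | rfl <;> norm_num
  have hΨ_neg (i j : Fin 2) : Ψ (-x) i j = (1 : Matrix (Fin 2) (Fin 2) ℂ) i j +
      ∫ y in Set.Ici x,
        (pauliExpZ (-Complex.I * k * (((-y : ℝ) : ℂ) - ((-x : ℝ) : ℂ))) * potQ q₀ σ (-y) *
          Ψ (-y) * pauliExpZ (Complex.I * k * (((-y : ℝ) : ℂ) - ((-x : ℝ) : ℂ)))) i j := by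
    rw [hΨ, setIntegral_Iic_neg]
  rw [symmPhi_eq_lambdaConj, lambdaConj_apply_of_eq_add_integral hσ' hΨ_neg, lambdaConj_one hσ',
    sub_eq_add_neg, ← integral_neg]
  congr 1
  refine integral_congr_ae (Filter.Eventually.of_forall fun y => ?_)
  simp only [lambdaConj_mul hσ', lambdaConj_pauliExpZ hσ', lambdaConj_potQ_neg hσ',
    ← symmPhi_eq_lambdaConj]
  have hconj (c : ℂ) : -(starRingEnd ℂ) (c * k * (((-y : ℝ) : ℂ) - ((-x : ℝ) : ℂ))) =
      (starRingEnd ℂ) c * k * ((y : ℂ) - x) := by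
    simp only [Complex.ofReal_neg, map_mul, map_sub, map_neg, Complex.conj_ofReal]
    ring
  rw [hconj, hconj, map_neg, Complex.conj_I, neg_neg, Matrix.mul_neg, Matrix.neg_mul,
    Matrix.neg_mul, Matrix.neg_apply]

/-- If a bounded measurable `Ψ : ℝ → M₂(ℂ)` satisfies the left Jost
integral equation with spectral parameter `-k`, i.e.
`Ψ(x) = I + ∫_{-∞}^x e^{-ik(y-x)σ₃} Q(y) Ψ(y) e^{ik(y-x)σ₃} dy`  (entrywise),
then `Φ(x) = Λ conj(Ψ(-x)) Λ⁻¹` satisfies the right Jost integral equation with spectral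
parameter `k`: `Φ(x) = I - ∫_x^∞ e^{ik(y-x)σ₃} Q(y) Φ(y) e^{-ik(y-x)σ₃} dy` (entrywise). -/
theorem statement2 (q₀ : ℝ → ℂ) (hq₀ : Integrable q₀)
    (σ : ℝ) (hσ : σ = 1 ∨ σ = -1) (k : ℝ)
    (Ψ : ℝ → Matrix (Fin 2) (Fin 2) ℂ)
    (hΨmeas : ∀ i j : Fin 2, Measurable (fun x : ℝ => Ψ x i j))
    (hΨbdd : ∃ C : ℝ, ∀ (x : ℝ) (i j : Fin 2), ‖Ψ x i j‖ ≤ C)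
    (hΨ : ∀ (x : ℝ) (i j : Fin 2),
      Ψ x i j = (1 : Matrix (Fin 2) (Fin 2) ℂ) i j +
        ∫ y in Set.Iic x,
          (pauliExpZ (-Complex.I * (k : ℂ) * ((y : ℂ) - (x : ℂ))) * potQ q₀ σ y * Ψ y *
            pauliExpZ (Complex.I * (k : ℂ) * ((y : ℂ) - (x : ℂ)))) i j) :
    ∀ (x : ℝ) (i j : Fin 2),
      symmPhi σ Ψ x i j = (1 : Matrix (Fin 2) (Fin 2) ℂ) i j -
        ∫ y in Set.Ici x,
          (pauliExpZ (Complex.I * (k : ℂ) * ((y : ℂ) - (x : ℂ))) * potQ q₀ σ y *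
            symmPhi σ Ψ y *
            pauliExpZ (-Complex.I * (k : ℂ) * ((y : ℂ) - (x : ℂ)))) i j :=
  statement2_general q₀ σ hσ k Ψ hΨ
end

section
/- There exists ε > 0 with the following property: for every q₀ ∈ L¹(ℝ) with ‖q₀‖_{L¹} < ε and every σ ∈ {1, −1}, the function a₁(k) = f₁^{(k)}(0) h₂^{(k)}(0) − f₂^{(k)}(0) h₁^{(k)}(0) satisfies |a₁(k)| ≥ 1/2 for all k ∈ ℝ, where f^{(k)} and h^{(k)} are the unique bounded solutions of the left and right (second-column) Jost systems with parameter k. -/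
open MeasureTheory

lemma aux_phase (c k y x : ℝ) :
    ‖Complex.exp ((c:ℂ) * Complex.I * (k:ℂ) * ((y:ℂ) - (x:ℂ)))‖ = 1 := by
  rw [Complex.norm_exp]
  norm_num [Complex.mul_re, Complex.mul_im]

lemma aux_norm_setIntegral_le {g : ℝ → ℂ} {w : ℝ → ℝ} {s : Set ℝ} (hs : MeasurableSet s)
    (hw : Integrable w) (hw0 : ∀ y, 0 ≤ w y) {C : ℝ} (hC : 0 ≤ C)
    (hg : ∀ y ∈ s, ‖g y‖ ≤ w y * C) :
    ‖∫ y in s, g y‖ ≤ (∫ y, w y) * C := by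
  calc ‖∫ y in s, g y‖ ≤ ∫ y in s, ‖g y‖ := norm_integral_le_integral_norm _
    _ ≤ ∫ y in s, w y * C := by
        refine integral_mono_of_nonneg (Filter.Eventually.of_forall fun y => norm_nonneg _)
          ((hw.mul_const C).restrict) ?_
        filter_upwards [self_mem_ae_restrict hs] with y hy using hg y hy
    _ = (∫ y in s, w y) * C := by rw [integral_mul_const]
    _ ≤ (∫ y, w y) * C :=
        mul_le_mul_of_nonneg_right
          (setIntegral_le_integral hw (Filter.Eventually.of_forall hw0)) hC

lemma aux_sup_bound {f : ℝ → ℂ × ℂ} {s : Set ℝ} (hs : s.Nonempty)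
    (hbdd : ∃ C, ∀ x ∈ s, ‖f x‖ ≤ C) {Q : ℝ} (hQ : Q ≤ 1/2)
    (step : ∀ C, 0 ≤ C → (∀ x ∈ s, ‖f x‖ ≤ C) → ∀ x ∈ s, ‖f x‖ ≤ 1 + Q * C) :
    ∀ x ∈ s, ‖f x‖ ≤ 2 := by
  obtain ⟨C, hC⟩ := hbdd
  set T : Set ℝ := (fun x => ‖f x‖) '' s with hT
  have hTne : T.Nonempty := hs.image _
  have hTbdd : BddAbove T := ⟨C, by rintro _ ⟨x, hx, rfl⟩; exact hC x hx⟩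
  set M := sSup T with hMdef
  have hM : ∀ x ∈ s, ‖f x‖ ≤ M := fun x hx => le_csSup hTbdd ⟨x, hx, rfl⟩
  have hM0 : 0 ≤ M := by
    obtain ⟨x, hx⟩ := hs; exact (norm_nonneg _).trans (hM x hx)
  have h2 : M ≤ 1 + Q * M :=
    csSup_le hTne (by rintro _ ⟨x, hx, rfl⟩; exact step M hM0 hM x hx)
  have hM2 : M ≤ 2 := by nlinarith
  exact fun x hx => (hM x hx).trans hM2

lemma aux_conj_norm (z : ℂ) : ‖(starRingEnd ℂ) z‖ = ‖z‖ := RCLike.norm_conj z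


lemma aux_left {q₀ : ℝ → ℂ} (hq : Integrable q₀) {σ k : ℝ} (hσ : ‖(σ:ℂ)‖ = 1)
    {f : ℝ → ℂ × ℂ} (hf : LeftJost1 q₀ σ k f)
    (hbdd : ∃ C, ∀ x ∈ Set.Iic (0:ℝ), ‖f x‖ ≤ C)
    (hQ0 : 0 ≤ ∫ y, ‖q₀ y‖) (hQ : (∫ y, ‖q₀ y‖) ≤ 1/2) :
    ‖(f 0).1 - 1‖ ≤ 2 * ∫ y, ‖q₀ y‖ ∧ ‖(f 0).2‖ ≤ 2 * ∫ y, ‖q₀ y‖ := by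
  set Q := ∫ y, ‖q₀ y‖ with hQdef
  have hnegQ : (∫ y, ‖q₀ (-y)‖) = Q := integral_neg_eq_self (fun y => ‖q₀ y‖) volume
  have key : ∀ C, 0 ≤ C → (∀ x ∈ Set.Iic (0:ℝ), ‖f x‖ ≤ C) →
      ∀ x ∈ Set.Iic (0:ℝ), ‖(f x).1 - 1‖ ≤ Q * C ∧ ‖(f x).2‖ ≤ Q * C := by
    intro C hC0 hC x hx
    rw [Set.mem_Iic] at hx
    obtain ⟨e1, e2⟩ := hf x hx
    constructor
    · rw [e1, add_sub_cancel_left]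
      refine aux_norm_setIntegral_le measurableSet_Iic hq.norm (fun y => norm_nonneg _) hC0 ?_
      intro y hy
      rw [Set.mem_Iic] at hy
      rw [norm_mul]
      exact mul_le_mul_of_nonneg_left
        ((norm_snd_le (f y)).trans (hC y (Set.mem_Iic.2 (hy.trans hx)))) (norm_nonneg _)
    · rw [e2, norm_mul, norm_neg, hσ, one_mul]
      have := aux_norm_setIntegral_le (g := fun y =>
          Complex.exp (-2 * Complex.I * (k : ℂ) * ((y : ℂ) - (x : ℂ))) *
            (starRingEnd ℂ) (q₀ (-y)) * (f y).1)
          (w := fun y => ‖q₀ (-y)‖) (s := Set.Iic x) measurableSet_Iic (hq.norm.comp_neg)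
          (fun y => norm_nonneg _) hC0 ?_
      · rw [hnegQ] at this; exact this
      · intro y hy
        rw [Set.mem_Iic] at hy
        rw [norm_mul, norm_mul]
        have hph : ‖Complex.exp (-2 * Complex.I * (k : ℂ) * ((y : ℂ) - (x : ℂ)))‖ = 1 := by
          have := aux_phase (-2) k y x; push_cast at this; exact this
        rw [hph, one_mul, aux_conj_norm]
        exact mul_le_mul_of_nonneg_left
          ((norm_fst_le (f y)).trans (hC y (Set.mem_Iic.2 (hy.trans hx)))) (norm_nonneg _)
  have hb2 : ∀ x ∈ Set.Iic (0:ℝ), ‖f x‖ ≤ 2 := by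
    refine aux_sup_bound ⟨0, Set.mem_Iic.2 le_rfl⟩ hbdd hQ ?_
    intro C hC0 hC x hx
    obtain ⟨h1, h2⟩ := key C hC0 hC x hx
    have hQC : 0 ≤ Q * C := mul_nonneg hQ0 hC0
    rw [Prod.norm_def]
    refine max_le ?_ (h2.trans (by linarith))
    have hns := norm_sub_norm_le ((f x).1) 1
    rw [norm_one] at hns
    linarith
  have := key 2 (by norm_num) hb2 0 (Set.mem_Iic.2 le_rfl)
  constructor <;> [exact this.1.trans_eq (by ring); exact this.2.trans_eq (by ring)]

lemma aux_right {q₀ : ℝ → ℂ} (hq : Integrable q₀) {σ k : ℝ} (hσ : ‖(σ:ℂ)‖ = 1)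
    {h : ℝ → ℂ × ℂ} (hh : RightJost2 q₀ σ k h)
    (hbdd : ∃ C, ∀ x ∈ Set.Ici (0:ℝ), ‖h x‖ ≤ C)
    (hQ0 : 0 ≤ ∫ y, ‖q₀ y‖) (hQ : (∫ y, ‖q₀ y‖) ≤ 1/2) :
    ‖(h 0).1‖ ≤ 2 * ∫ y, ‖q₀ y‖ ∧ ‖(h 0).2 - 1‖ ≤ 2 * ∫ y, ‖q₀ y‖ := by
  set Q := ∫ y, ‖q₀ y‖ with hQdef
  have hnegQ : (∫ y, ‖q₀ (-y)‖) = Q := integral_neg_eq_self (fun y => ‖q₀ y‖) volume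
  have key : ∀ C, 0 ≤ C → (∀ x ∈ Set.Ici (0:ℝ), ‖h x‖ ≤ C) →
      ∀ x ∈ Set.Ici (0:ℝ), ‖(h x).1‖ ≤ Q * C ∧ ‖(h x).2 - 1‖ ≤ Q * C := by
    intro C hC0 hC x hx
    rw [Set.mem_Ici] at hx
    obtain ⟨e1, e2⟩ := hh x hx
    constructor
    · rw [e1, norm_neg]
      refine aux_norm_setIntegral_le measurableSet_Ici hq.norm (fun y => norm_nonneg _) hC0 ?_
      intro y hy
      rw [Set.mem_Ici] at hy
      rw [norm_mul, norm_mul]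
      have hph : ‖Complex.exp (2 * Complex.I * (k : ℂ) * ((y : ℂ) - (x : ℂ)))‖ = 1 := by
        have := aux_phase 2 k y x; push_cast at this; exact this
      rw [hph, one_mul]
      exact mul_le_mul_of_nonneg_left
        ((norm_snd_le (h y)).trans (hC y (Set.mem_Ici.2 (hx.trans hy)))) (norm_nonneg _)
    · rw [e2, add_sub_cancel_left, norm_mul, hσ, one_mul]
      have := aux_norm_setIntegral_le (g := fun y => (starRingEnd ℂ) (q₀ (-y)) * (h y).1)
          (w := fun y => ‖q₀ (-y)‖) (s := Set.Ici x) measurableSet_Ici (hq.norm.comp_neg)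
          (fun y => norm_nonneg _) hC0 ?_
      · rw [hnegQ] at this; exact this
      · intro y hy
        rw [Set.mem_Ici] at hy
        rw [norm_mul, aux_conj_norm]
        exact mul_le_mul_of_nonneg_left
          ((norm_fst_le (h y)).trans (hC y (Set.mem_Ici.2 (hx.trans hy)))) (norm_nonneg _)
  have hb2 : ∀ x ∈ Set.Ici (0:ℝ), ‖h x‖ ≤ 2 := by
    refine aux_sup_bound ⟨0, Set.mem_Ici.2 le_rfl⟩ hbdd hQ ?_
    intro C hC0 hC x hx
    obtain ⟨h1, h2⟩ := key C hC0 hC x hx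
    have hQC : 0 ≤ Q * C := mul_nonneg hQ0 hC0
    rw [Prod.norm_def]
    refine max_le (h1.trans (by linarith)) ?_
    have hns := norm_sub_norm_le ((h x).2) 1
    rw [norm_one] at hns
    linarith
  have := key 2 (by norm_num) hb2 0 (Set.mem_Ici.2 le_rfl)
  constructor <;> [exact this.1.trans_eq (by ring); exact this.2.trans_eq (by ring)]

/-- There exists `ε > 0` such that for every `q₀ ∈ L¹(ℝ)` with
`‖q₀‖_{L¹} < ε`, every `σ ∈ {1,-1}` and every `k ∈ ℝ`, the scattering coefficient
`a₁(k) = f₁^{(k)}(0) h₂^{(k)}(0) - f₂^{(k)}(0) h₁^{(k)}(0)` (built from the unique bounded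
measurable solutions of the left and right (second-column) Jost systems) satisfies
`|a₁(k)| ≥ 1/2`. -/
theorem statement7 :
    ∃ ε : ℝ, 0 < ε ∧
      ∀ (q₀ : ℝ → ℂ), Integrable q₀ → (∫ y : ℝ, ‖q₀ y‖) < ε →
      ∀ (σ : ℝ), σ = 1 ∨ σ = -1 →
      ∀ (k : ℝ) (f h : ℝ → ℂ × ℂ),
        BddMeasOn (Set.Iic 0) f → LeftJost1 q₀ σ k f →
        BddMeasOn (Set.Ici 0) h → RightJost2 q₀ σ k h →
        (1:ℝ) / 2 ≤ ‖(f 0).1 * (h 0).2 - (f 0).2 * (h 0).1‖ := by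
  refine ⟨1/20, by norm_num, ?_⟩
  intro q₀ hq hQlt σ hσ k f h hfb hf hhb hh
  have hσn : ‖(σ:ℂ)‖ = 1 := by rcases hσ with rfl | rfl <;> norm_num
  have hQ0 : 0 ≤ ∫ y, ‖q₀ y‖ := integral_nonneg fun y => norm_nonneg _
  have hQhalf : (∫ y, ‖q₀ y‖) ≤ 1/2 := by linarith
  obtain ⟨hA, hB⟩ := aux_left hq hσn hf hfb.2 hQ0 hQhalf
  obtain ⟨hD, hE⟩ := aux_right hq hσn hh hhb.2 hQ0 hQhalf
  have h10 : 2 * (∫ y, ‖q₀ y‖) ≤ 1/10 := by linarith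
  have hA' := hA.trans h10
  have hB' := hB.trans h10
  have hD' := hD.trans h10
  have hE' := hE.trans h10
  set a := (f 0).1 * (h 0).2 - (f 0).2 * (h 0).1 with ha
  have hid : a - 1 = ((f 0).1 - 1) * ((h 0).2 - 1) + ((f 0).1 - 1) + ((h 0).2 - 1)
      - (f 0).2 * (h 0).1 := by rw [ha]; ring
  have hnorm : ‖a - 1‖ ≤ 22/100 := by
    rw [hid]
    calc ‖((f 0).1 - 1) * ((h 0).2 - 1) + ((f 0).1 - 1) + ((h 0).2 - 1) - (f 0).2 * (h 0).1‖
        ≤ ‖((f 0).1 - 1) * ((h 0).2 - 1) + ((f 0).1 - 1) + ((h 0).2 - 1)‖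
            + ‖(f 0).2 * (h 0).1‖ := norm_sub_le _ _
      _ ≤ ‖((f 0).1 - 1) * ((h 0).2 - 1) + ((f 0).1 - 1)‖ + ‖(h 0).2 - 1‖
            + ‖(f 0).2 * (h 0).1‖ := by gcongr; exact norm_add_le _ _
      _ ≤ ‖((f 0).1 - 1) * ((h 0).2 - 1)‖ + ‖(f 0).1 - 1‖ + ‖(h 0).2 - 1‖
            + ‖(f 0).2 * (h 0).1‖ := by gcongr; exact norm_add_le _ _
      _ = ‖(f 0).1 - 1‖ * ‖(h 0).2 - 1‖ + ‖(f 0).1 - 1‖ + ‖(h 0).2 - 1‖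
            + ‖(f 0).2‖ * ‖(h 0).1‖ := by rw [norm_mul, norm_mul]
      _ ≤ (1/10) * (1/10) + 1/10 + 1/10 + (1/10) * (1/10) := by gcongr
      _ = 22/100 := by norm_num
  have h1 : ‖(1:ℂ)‖ - ‖a‖ ≤ ‖a - 1‖ := by
    calc ‖(1:ℂ)‖ - ‖a‖ ≤ ‖(1:ℂ) - a‖ := norm_sub_norm_le _ _
      _ = ‖a - 1‖ := by rw [norm_sub_rev]
  rw [norm_one] at h1
  linarith
end

section
/- For every α ∈ (0, 1) there exists a constant C = C(α) > 0 such that for all t > 0 and all z ∈ ℂ: ∫_0^∞ ∫_v^∞ ((u² + v²)^{−α/2} / |u + iv − z|) e^{−8tuv} du dv ≤ C t^{−(1−α)/2}. -/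
/-!
Bound `(u² + v²)^(-α/2) ≤ u^(-α)` and put `T = t^(-1/2)`, so that `8t T² ≥ 1`. Split the sector
according to whether `w = u + iv` satisfies `|w - z| < T`. Far from `z` the kernel `1/|w - z|` is
at most `1/T`, while `∫∫ u^(-β) e^(-cuv)` over the sector is `O(T^(2-β))` for `0 < β < 2`:
integrating in `v` first gives at most `min (u^(1-β), u^(-β-1)/c)`. Near `z`, Young's inequality
`ab ≤ a^p + b^q` with `p = (1+α)/α`, `q = 1+α` separates the factors: the first gives the sector
integral with `β = 1 + α`, and `∫_{|w-z|<T} |w-z|^(-q) = O(T^(2-q))` follows on the enclosing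
square from `|w|^(-q) ≤ |Re w|^(-q/2) |Im w|^(-q/2)`. All three pieces are `O(T^(1-α))`.
-/

open MeasureTheory Set Real
open scoped ENNReal

lemma lintegral_Ioc_rpow {r T : ℝ} (hr : -1 < r) (hT : 0 ≤ T) :
    ∫⁻ s in Ioc 0 T, ENNReal.ofReal (s ^ r) = ENNReal.ofReal (T ^ (r + 1) / (r + 1)) := by
  rw [← ofReal_integral_eq_lintegral_ofReal
    (intervalIntegral.intervalIntegrable_rpow' (a := 0) (b := T) hr).1, ←
    intervalIntegral.integral_of_le hT, integral_rpow (Or.inl hr),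
    zero_rpow (by linarith), sub_zero]
  filter_upwards [ae_restrict_mem measurableSet_Ioc] with s hs
  exact rpow_nonneg hs.1.le r

lemma lintegral_Ioi_rpow {r c : ℝ} (hr : r < -1) (hc : 0 < c) :
    ∫⁻ t in Ioi c, ENNReal.ofReal (t ^ r) = ENNReal.ofReal (-c ^ (r + 1) / (r + 1)) := by
  rw [← ofReal_integral_eq_lintegral_ofReal (integrableOn_Ioi_rpow_of_lt hr hc),
    integral_Ioi_rpow_of_lt hr hc]
  filter_upwards [ae_restrict_mem measurableSet_Ioi] with t ht
  exact rpow_nonneg (hc.trans ht).le r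

lemma lintegral_exp_neg_mul_Ioi {a : ℝ} (ha : 0 < a) :
    ∫⁻ v in Ioi 0, ENNReal.ofReal (exp (-(a * v))) = ENNReal.ofReal a⁻¹ := by
  simp_rw [← neg_mul]
  rw [← ofReal_integral_eq_lintegral_ofReal (exp_neg_integrableOn_Ioi 0 ha)
    (.of_forall fun v => (exp_pos _).le), integral_exp_mul_Ioi (by linarith)]
  simp [div_neg, neg_div]

lemma lintegral_comp_abs_sub (g : ℝ → ℝ≥0∞) (x : ℝ) :
    ∫⁻ s, g |s - x| = 2 * ∫⁻ s in Ioi 0, g s := by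
  have h_pos : ∫⁻ s in Ioi 0, g |s| = ∫⁻ s in Ioi 0, g s :=
    setLIntegral_congr_fun measurableSet_Ioi fun s hs => by rw [abs_of_pos hs]
  have h_neg : ∫⁻ s in (Ioi 0)ᶜ, g |s| = ∫⁻ s in Ioi 0, g |s| := by
    have h_refl : ∀ s : ℝ, (Ioi 0)ᶜ.indicator (fun s => g |s|) (-s) =
        (Ici 0).indicator (fun s => g |s|) s := fun s => by
      by_cases hs : 0 ≤ s <;> simp [indicator, hs, abs_neg]
    rw [← lintegral_indicator measurableSet_Ioi.compl, ← lintegral_neg_eq_self]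
    simp_rw [h_refl]
    rw [lintegral_indicator measurableSet_Ici, setLIntegral_congr Ioi_ae_eq_Ici.symm]
  rw [lintegral_sub_right_eq_self (fun s => g |s|) x, ← lintegral_add_compl _ measurableSet_Ioi,
    h_neg, h_pos, two_mul]

def sector : Set (ℝ × ℝ) := {a | 0 < a.2 ∧ a.2 < a.1}

lemma measurableSet_sector : MeasurableSet sector :=
  (measurableSet_lt measurable_const measurable_snd).inter
    (measurableSet_lt measurable_snd measurable_fst)

noncomputable def sectorWeight (β c : ℝ) : ℝ × ℝ → ℝ≥0∞ :=
  sector.indicator fun a => ENNReal.ofReal (a.1 ^ (-β) * exp (-(c * a.1 * a.2)))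

lemma measurable_sectorWeight (β c : ℝ) : Measurable (sectorWeight β c) :=
  Measurable.indicator (by fun_prop) measurableSet_sector

lemma sectorWeight_rpow (β c : ℝ) {p : ℝ} (hp : 0 < p) (a : ℝ × ℝ) :
    sectorWeight β c a ^ p = sectorWeight (β * p) (c * p) a := by
  by_cases ha : a ∈ sector
  · have hu : 0 ≤ a.1 := (ha.1.trans ha.2).le
    rw [sectorWeight, sectorWeight, indicator_of_mem ha, indicator_of_mem ha,
      ENNReal.ofReal_rpow_of_nonneg (by positivity) hp.le,
      mul_rpow (by positivity) (by positivity), ← rpow_mul hu, ← exp_mul]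
    ring_nf
  · rw [sectorWeight, sectorWeight, indicator_of_notMem ha, indicator_of_notMem ha,
      ENNReal.zero_rpow_of_pos hp]

lemma lintegral_sectorWeight_slice_le_rpow {β c u : ℝ} (hc : 0 ≤ c) (hu : 0 < u) :
    ∫⁻ v, sectorWeight β c (u, v) ≤ ENNReal.ofReal (u ^ (1 - β)) := by
  have h_le : ∀ v, sectorWeight β c (u, v) ≤
      (Ioo 0 u).indicator (fun _ => ENNReal.ofReal (u ^ (-β))) v := by
    intro v
    by_cases hv : v ∈ Ioo 0 u
    · rw [sectorWeight, indicator_of_mem (show (u, v) ∈ sector from hv), indicator_of_mem hv]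
      gcongr
      exact mul_le_of_le_one_right (by positivity) (exp_le_one_iff.2 (by
        have := mul_nonneg (mul_nonneg hc hu.le) hv.1.le; linarith))
    · rw [sectorWeight, indicator_of_notMem (show (u, v) ∉ sector from hv)]
      exact zero_le
  calc ∫⁻ v, sectorWeight β c (u, v)
      ≤ ∫⁻ v, (Ioo 0 u).indicator (fun _ => ENNReal.ofReal (u ^ (-β))) v := lintegral_mono h_le
    _ = ENNReal.ofReal (u ^ (1 - β)) := by
      rw [lintegral_indicator_const measurableSet_Ioo, Real.volume_Ioo, sub_zero,
        ← ENNReal.ofReal_mul (by positivity), ← rpow_add_one hu.ne']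
      ring_nf

lemma lintegral_sectorWeight_slice_le_rpow_sub_one {β c u : ℝ} (hc : 0 < c) (hu : 0 < u) :
    ∫⁻ v, sectorWeight β c (u, v) ≤ ENNReal.ofReal c⁻¹ * ENNReal.ofReal (u ^ (-β - 1)) := by
  have h_le : ∀ v, sectorWeight β c (u, v) ≤ (Ioi 0).indicator
      (fun v => ENNReal.ofReal (u ^ (-β)) * ENNReal.ofReal (exp (-(c * u * v)))) v := by
    intro v
    by_cases hv : (u, v) ∈ sector
    · rw [sectorWeight, indicator_of_mem hv, indicator_of_mem (show v ∈ Ioi 0 from hv.1),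
        ENNReal.ofReal_mul (by positivity)]
    · rw [sectorWeight, indicator_of_notMem hv]
      exact zero_le
  calc ∫⁻ v, sectorWeight β c (u, v)
      ≤ ∫⁻ v in Ioi 0, ENNReal.ofReal (u ^ (-β)) * ENNReal.ofReal (exp (-(c * u * v))) := by
        rw [← lintegral_indicator measurableSet_Ioi]; exact lintegral_mono h_le
    _ = ENNReal.ofReal c⁻¹ * ENNReal.ofReal (u ^ (-β - 1)) := by
      rw [lintegral_const_mul' _ _ ENNReal.ofReal_ne_top, lintegral_exp_neg_mul_Ioi (by positivity),
        ← ENNReal.ofReal_mul (by positivity), ← ENNReal.ofReal_mul (by positivity),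
        rpow_sub_one hu.ne', mul_inv]
      ring_nf

lemma lintegral_sectorWeight_le {β c T : ℝ} (hβ0 : 0 < β) (hβ2 : β < 2) (hT : 0 < T)
    (hcT : 1 ≤ c * T ^ 2) :
    ∫⁻ a, sectorWeight β c a ≤ ENNReal.ofReal ((1 / (2 - β) + 1 / β) * T ^ (2 - β)) := by
  have hc : 0 < c := pos_of_mul_pos_left (by linarith) (by positivity : (0 : ℝ) ≤ T ^ 2)
  have h_slice : ∀ u, ∫⁻ v, sectorWeight β c (u, v) ≤
      (Ioc 0 T).indicator (fun u => ENNReal.ofReal (u ^ (1 - β))) u +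
      (Ioi T).indicator (fun u => ENNReal.ofReal (T ^ 2) * ENNReal.ofReal (u ^ (-β - 1))) u := by
    intro u
    rcases le_or_gt u 0 with hu | hu
    · have : ∀ v, sectorWeight β c (u, v) = 0 := fun v =>
        indicator_of_notMem (fun h : (u, v) ∈ sector => by linarith [h.1, h.2]) _
      simp [this]
    rcases le_or_gt u T with huT | huT
    · rw [indicator_of_mem (show u ∈ Ioc 0 T from ⟨hu, huT⟩)]
      exact (lintegral_sectorWeight_slice_le_rpow hc.le hu).trans le_self_add
    · rw [indicator_of_mem (show u ∈ Ioi T from huT)]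
      refine (lintegral_sectorWeight_slice_le_rpow_sub_one hc hu).trans (le_add_left ?_)
      gcongr
      rw [inv_le_iff_one_le_mul₀ hc]
      linarith
  calc ∫⁻ a, sectorWeight β c a
      = ∫⁻ u, ∫⁻ v, sectorWeight β c (u, v) := by
        rw [Measure.volume_eq_prod, lintegral_prod _ (measurable_sectorWeight β c).aemeasurable]
    _ ≤ (∫⁻ u in Ioc 0 T, ENNReal.ofReal (u ^ (1 - β))) +
          ∫⁻ u in Ioi T, ENNReal.ofReal (T ^ 2) * ENNReal.ofReal (u ^ (-β - 1)) := by
        rw [← lintegral_indicator measurableSet_Ioc, ← lintegral_indicator measurableSet_Ioi,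
          ← lintegral_add_left (Measurable.indicator (by fun_prop) measurableSet_Ioc)]
        exact lintegral_mono h_slice
    _ = ENNReal.ofReal ((1 / (2 - β) + 1 / β) * T ^ (2 - β)) := by
      have h2β : 0 < 2 - β := by linarith
      have hT2 : T ^ 2 * T ^ (-β) = T ^ (2 - β) := by
        rw [sub_eq_add_neg, rpow_add hT, rpow_two]
      rw [lintegral_const_mul' _ _ ENNReal.ofReal_ne_top, lintegral_Ioc_rpow (by linarith) hT.le,
        lintegral_Ioi_rpow (by linarith) hT, show 1 - β + 1 = 2 - β by ring,
        show -β - 1 + 1 = -β by ring, neg_div_neg_eq, ← ENNReal.ofReal_mul (by positivity),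
        ← ENNReal.ofReal_add (by positivity) (by positivity), mul_div_assoc', hT2]
      ring_nf

lemma rpow_neg_half_sq_add_sq_le {α u : ℝ} (hα : 0 ≤ α) (hu : 0 < u) (v : ℝ) :
    (u ^ 2 + v ^ 2) ^ (-(α / 2)) ≤ u ^ (-α) := by
  calc (u ^ 2 + v ^ 2) ^ (-(α / 2)) ≤ (u ^ 2) ^ (-(α / 2)) :=
        rpow_le_rpow_of_nonpos (by positivity) (le_add_of_nonneg_right (sq_nonneg v)) (by linarith)
    _ = u ^ (-α) := by rw [← rpow_natCast, ← rpow_mul hu.le]; ring_nf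

lemma lintegral_Ioi_lintegral_Ioi_le_lintegral_sectorWeight {α : ℝ} (hα : 0 ≤ α) (t : ℝ) (z : ℂ) :
    ∫⁻ (v : ℝ) in Ioi 0, ∫⁻ (u : ℝ) in Ioi v, ENNReal.ofReal ((u ^ 2 + v ^ 2) ^ (-(α / 2)) /
        ‖(u : ℂ) + (v : ℂ) * Complex.I - z‖ * exp (-8 * t * u * v)) ≤
      ∫⁻ a, sectorWeight α (8 * t) a * ‖Complex.equivRealProd.symm a - z‖ₑ⁻¹ := by
  have hF : Measurable fun a => sectorWeight α (8 * t) a * ‖Complex.equivRealProd.symm a - z‖ₑ⁻¹ :=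
    (measurable_sectorWeight _ _).mul
      (Complex.measurableEquivRealProd.symm.measurable.sub_const z).enorm.inv
  rw [Measure.volume_eq_prod, lintegral_prod_symm _ hF.aemeasurable]
  refine (lintegral_mono_ae (ae_restrict_of_forall_mem measurableSet_Ioi fun v hv => ?_)).trans
    (setLIntegral_le_lintegral _ _)
  rw [← lintegral_indicator measurableSet_Ioi]
  refine lintegral_mono fun u => ?_
  by_cases hu : u ∈ Ioi v
  · have hu0 : 0 < u := lt_trans hv hu
    rw [indicator_of_mem hu, sectorWeight, indicator_of_mem (show (u, v) ∈ sector from ⟨hv, hu⟩),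
      Complex.equivRealProd_symm_apply, ← ofReal_norm]
    calc _ = ENNReal.ofReal ((u ^ 2 + v ^ 2) ^ (-(α / 2)) * exp (-(8 * t * u * v)) *
          ‖(u : ℂ) + (v : ℂ) * Complex.I - z‖⁻¹) := by ring_nf
      _ ≤ _ := by
        rw [ENNReal.ofReal_mul (by positivity)]
        gcongr
        · exact rpow_neg_half_sq_add_sq_le hα hu0 v
        · exact ENNReal.ofReal_inv_le
  · rw [indicator_of_notMem hu]
    exact zero_le

lemma enorm_rpow_neg_le_re_im (w : ℂ) {q : ℝ} (hq : 0 ≤ q) :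
    ‖w‖ₑ ^ (-q) ≤ ‖w.re‖ₑ ^ (-(q / 2)) * ‖w.im‖ₑ ^ (-(q / 2)) := by
  have h_prod : ‖w.re‖ₑ * ‖w.im‖ₑ ≤ ‖w‖ₑ ^ (2 : ℝ) := by
    rw [ENNReal.rpow_two, ← enorm_mul, ← enorm_pow, enorm_le_iff_norm_le, norm_mul, norm_pow]
    exact mul_le_mul (Complex.abs_re_le_norm w) (Complex.abs_im_le_norm w) (abs_nonneg _)
      (norm_nonneg _) |>.trans_eq (sq _).symm
  rw [← ENNReal.mul_rpow_of_ne_top enorm_ne_top enorm_ne_top, show -q = 2 * -(q / 2) by ring,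
    ENNReal.rpow_mul, ENNReal.rpow_neg, ENNReal.rpow_neg]
  gcongr

lemma lintegral_indicator_abs_sub_rpow_neg {γ T : ℝ} (hγ : γ < 1) (hT : 0 ≤ T) (x : ℝ) :
    ∫⁻ s, (Iic T).indicator (fun s => ‖s‖ₑ ^ (-γ)) |s - x| =
      ENNReal.ofReal (2 * (T ^ (1 - γ) / (1 - γ))) := by
  rw [lintegral_comp_abs_sub, lintegral_indicator measurableSet_Iic,
    Measure.restrict_restrict measurableSet_Iic, Iic_inter_Ioi,
    setLIntegral_congr_fun measurableSet_Ioc fun s hs => by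
      rw [Real.enorm_eq_ofReal hs.1.le, ENNReal.ofReal_rpow_of_pos hs.1],
    lintegral_Ioc_rpow (by linarith) hT, ENNReal.ofReal_mul zero_le_two, ENNReal.ofReal_ofNat,
    neg_add_eq_sub]

lemma setLIntegral_ball_enorm_sub_rpow_neg_le (z : ℂ) {q T : ℝ} (hq0 : 0 ≤ q) (hq2 : q < 2)
    (hT : 0 < T) :
    ∫⁻ a in Complex.equivRealProd.symm ⁻¹' Metric.ball z T,
        ‖Complex.equivRealProd.symm a - z‖ₑ ^ (-q) ≤
      ENNReal.ofReal (16 / (2 - q) ^ 2 * T ^ (2 - q)) := by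
  -- `0 ^ (-(q / 2)) = ⊤` in `ℝ≥0∞`, so the bound below also holds where `Re w = 0` or `Im w = 0`.
  set g : ℝ → ℝ≥0∞ := (Iic T).indicator (fun s => ‖s‖ₑ ^ (-(q / 2)))
  have hg : Measurable g := Measurable.indicator (by fun_prop) measurableSet_Iic
  have h_box : ∀ a : ℝ × ℝ, (Complex.equivRealProd.symm ⁻¹' Metric.ball z T).indicator
      (fun a => ‖Complex.equivRealProd.symm a - z‖ₑ ^ (-q)) a ≤
      g |a.1 - z.re| * g |a.2 - z.im| := by
    intro a
    set w := Complex.equivRealProd.symm a - z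
    have hre : w.re = a.1 - z.re := by simp [w]
    have him : w.im = a.2 - z.im := by simp [w]
    have hmem : a ∈ Complex.equivRealProd.symm ⁻¹' Metric.ball z T ↔ ‖w‖ < T := by
      rw [mem_preimage, Metric.mem_ball, dist_eq_norm]
    by_cases ha : ‖w‖ < T
    · rw [← hre, ← him, indicator_of_mem (hmem.2 ha)]
      simp only [g,
        indicator_of_mem (show |w.re| ∈ Iic T from (Complex.abs_re_le_norm w).trans ha.le),
        indicator_of_mem (show |w.im| ∈ Iic T from (Complex.abs_im_le_norm w).trans ha.le),
        enorm_abs]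
      exact enorm_rpow_neg_le_re_im w hq0
    · rw [indicator_of_notMem (mt hmem.1 ha)]
      exact zero_le
  calc _ = ∫⁻ a, (Complex.equivRealProd.symm ⁻¹' Metric.ball z T).indicator
        (fun a => ‖Complex.equivRealProd.symm a - z‖ₑ ^ (-q)) a :=
        (lintegral_indicator
          (measurableSet_ball.preimage Complex.measurableEquivRealProd.symm.measurable) _).symm
    _ ≤ ∫⁻ a : ℝ × ℝ, g |a.1 - z.re| * g |a.2 - z.im| := lintegral_mono h_box
    _ = ENNReal.ofReal (2 * (T ^ (1 - q / 2) / (1 - q / 2))) *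
          ENNReal.ofReal (2 * (T ^ (1 - q / 2) / (1 - q / 2))) := by
        rw [Measure.volume_eq_prod, lintegral_prod_mul (f := fun s => g |s - z.re|)
          (g := fun s => g |s - z.im|) (by fun_prop) (by fun_prop),
          lintegral_indicator_abs_sub_rpow_neg (by linarith) hT.le,
          lintegral_indicator_abs_sub_rpow_neg (by linarith) hT.le]
    _ = ENNReal.ofReal (16 / (2 - q) ^ 2 * T ^ (2 - q)) := by
        have hq2' : 0 < 1 - q / 2 := by linarith
        rw [← ENNReal.ofReal_mul (by have := rpow_nonneg hT.le (1 - q / 2); positivity)]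
        congr 1
        rw [show 2 - q = (1 - q / 2) * 2 by ring, rpow_mul hT.le, rpow_two]
        field_simp
        ring

lemma ENNReal.mul_le_rpow_add_rpow (a b : ℝ≥0∞) {p q : ℝ} (hpq : p.HolderConjugate q) :
    a * b ≤ a ^ p + b ^ q := by
  refine (ENNReal.young_inequality a b hpq).trans (add_le_add ?_ ?_) <;>
    refine ENNReal.div_le_of_le_mul (le_mul_of_one_le_right' (ENNReal.one_le_ofReal.2 ?_))
  exacts [hpq.lt.le, hpq.symm.lt.le]

lemma setLIntegral_mul_le_lintegral_rpow_add {X : Type*} [MeasurableSpace X] {μ : Measure X}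
    {f : X → ℝ≥0∞} (hf : AEMeasurable f μ) (g : X → ℝ≥0∞) {p q : ℝ} (hpq : p.HolderConjugate q)
    (s : Set X) :
    ∫⁻ x in s, f x * g x ∂μ ≤ ∫⁻ x, f x ^ p ∂μ + ∫⁻ x in s, g x ^ q ∂μ :=
  calc ∫⁻ x in s, f x * g x ∂μ ≤ ∫⁻ x in s, (f x ^ p + g x ^ q) ∂μ :=
        lintegral_mono fun _ => ENNReal.mul_le_rpow_add_rpow _ _ hpq
    _ = ∫⁻ x in s, f x ^ p ∂μ + ∫⁻ x in s, g x ^ q ∂μ :=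
        lintegral_add_left' (hf.pow_const p).restrict _
    _ ≤ ∫⁻ x, f x ^ p ∂μ + ∫⁻ x in s, g x ^ q ∂μ :=
        add_le_add_left (setLIntegral_le_lintegral _ _) _

lemma setLIntegral_compl_ball_mul_enorm_inv_le (f : ℝ × ℝ → ℝ≥0∞) (z : ℂ) {T : ℝ}
    (hT : 0 < T) :
    ∫⁻ a in (Complex.equivRealProd.symm ⁻¹' Metric.ball z T)ᶜ,
        f a * ‖Complex.equivRealProd.symm a - z‖ₑ⁻¹ ≤
      (ENNReal.ofReal T)⁻¹ * ∫⁻ a, f a := by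
  have hB : MeasurableSet (Complex.equivRealProd.symm ⁻¹' Metric.ball z T) :=
    measurableSet_ball.preimage Complex.measurableEquivRealProd.symm.measurable
  calc ∫⁻ a in (Complex.equivRealProd.symm ⁻¹' Metric.ball z T)ᶜ,
        f a * ‖Complex.equivRealProd.symm a - z‖ₑ⁻¹
      ≤ ∫⁻ a in (Complex.equivRealProd.symm ⁻¹' Metric.ball z T)ᶜ, (ENNReal.ofReal T)⁻¹ * f a := by
        refine lintegral_mono_ae (ae_restrict_of_forall_mem hB.compl fun a ha => ?_)
        rw [mul_comm]
        gcongr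
        rw [← ofReal_norm, ← dist_eq_norm]
        exact ENNReal.ofReal_le_ofReal (not_lt.1 ha)
    _ ≤ (ENNReal.ofReal T)⁻¹ * ∫⁻ a, f a := by
        rw [lintegral_const_mul' _ _ (by simpa using hT)]
        exact mul_le_mul_right (setLIntegral_le_lintegral _ _) _

lemma lintegral_sectorWeight_mul_enorm_inv_le {α c T : ℝ} (hα0 : 0 < α) (hα1 : α < 1) (hT : 0 < T)
    (hcT : 1 ≤ c * T ^ 2) (z : ℂ) :
    ∫⁻ a, sectorWeight α c a * ‖Complex.equivRealProd.symm a - z‖ₑ⁻¹ ≤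
      ENNReal.ofReal ((1 / (2 - α) + 1 / α + (1 / (1 - α) + 1 / (1 + α)) + 16 / (1 - α) ^ 2) *
        T ^ (1 - α)) := by
  set B := Complex.equivRealProd.symm ⁻¹' Metric.ball z T
  have hB : MeasurableSet B :=
    measurableSet_ball.preimage Complex.measurableEquivRealProd.symm.measurable
  set p := (1 + α) / α with hp_def
  have hp : 1 < p := by rw [hp_def, lt_div_iff₀ hα0]; linarith
  have hαp : α * p = 1 + α := by rw [hp_def]; field_simp
  have hpq : p.HolderConjugate (1 + α) :=
    Real.holderConjugate_iff.2 ⟨hp, by rw [hp_def, inv_div]; field_simp; ring⟩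
  have h_near : ∫⁻ a in B, sectorWeight α c a * ‖Complex.equivRealProd.symm a - z‖ₑ⁻¹ ≤
      ENNReal.ofReal ((1 / (1 - α) + 1 / (1 + α)) * T ^ (1 - α)) +
        ENNReal.ofReal (16 / (1 - α) ^ 2 * T ^ (1 - α)) := by
    refine (setLIntegral_mul_le_lintegral_rpow_add
      (measurable_sectorWeight α c).aemeasurable _ hpq B).trans (add_le_add ?_ ?_)
    · calc ∫⁻ a, sectorWeight α c a ^ p = ∫⁻ a, sectorWeight (1 + α) (c * p) a := by
            simp_rw [sectorWeight_rpow α c (by positivity : 0 < p), hαp]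
        _ ≤ ENNReal.ofReal ((1 / (2 - (1 + α)) + 1 / (1 + α)) * T ^ (2 - (1 + α))) :=
            lintegral_sectorWeight_le (by linarith) (by linarith) hT (by nlinarith)
        _ = ENNReal.ofReal ((1 / (1 - α) + 1 / (1 + α)) * T ^ (1 - α)) := by ring_nf
    · calc ∫⁻ a in B, ‖Complex.equivRealProd.symm a - z‖ₑ⁻¹ ^ (1 + α)
          = ∫⁻ a in B, ‖Complex.equivRealProd.symm a - z‖ₑ ^ (-(1 + α)) := by
            simp_rw [ENNReal.inv_rpow, ← ENNReal.rpow_neg]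
        _ ≤ ENNReal.ofReal (16 / (2 - (1 + α)) ^ 2 * T ^ (2 - (1 + α))) :=
            setLIntegral_ball_enorm_sub_rpow_neg_le z (by linarith) (by linarith) hT
        _ = ENNReal.ofReal (16 / (1 - α) ^ 2 * T ^ (1 - α)) := by ring_nf
  have h_far : ∫⁻ a in Bᶜ, sectorWeight α c a * ‖Complex.equivRealProd.symm a - z‖ₑ⁻¹ ≤
      ENNReal.ofReal ((1 / (2 - α) + 1 / α) * T ^ (1 - α)) := by
    refine (setLIntegral_compl_ball_mul_enorm_inv_le _ z hT).trans ?_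
    refine (mul_le_mul_right (lintegral_sectorWeight_le hα0 (by linarith) hT hcT) _).trans_eq ?_
    rw [← ENNReal.ofReal_inv_of_pos hT, ← ENNReal.ofReal_mul (by positivity)]
    congr 1
    rw [show 2 - α = 1 - α + 1 by ring, rpow_add_one hT.ne']
    field_simp
  rw [← lintegral_add_compl _ hB]
  refine (add_le_add h_near h_far).trans_eq ?_
  have h1α : 0 < 1 - α := by linarith
  have h2α : 0 < 2 - α := by linarith
  rw [← ENNReal.ofReal_add (by positivity) (by positivity),
    ← ENNReal.ofReal_add (by positivity) (by positivity)]
  congr 1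
  ring

/-- For every `α ∈ (0,1)` there is a constant `C = C(α) > 0` such that
for all `t > 0` and all `z ∈ ℂ`,
`∫₀^∞ ∫_v^∞ ((u²+v²)^{-α/2} / |u+iv-z|) e^{-8tuv} du dv ≤ C t^{-(1-α)/2}`. -/
theorem statement16 (α : ℝ) (hα0 : 0 < α) (hα1 : α < 1) :
    ∃ C : ℝ, 0 < C ∧
      ∀ t : ℝ, 0 < t → ∀ z : ℂ,
        ∫⁻ (v : ℝ) in Set.Ioi (0 : ℝ), ∫⁻ (u : ℝ) in Set.Ioi v,
            ENNReal.ofReal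
              ((u ^ 2 + v ^ 2) ^ (-(α / 2)) /
                  ‖(u : ℂ) + (v : ℂ) * Complex.I - z‖ *
                Real.exp (-8 * t * u * v)) ≤
          ENNReal.ofReal (C * t ^ (-((1 - α) / 2))) := by
  have h1α : 0 < 1 - α := by linarith
  have h2α : 0 < 2 - α := by linarith
  refine ⟨1 / (2 - α) + 1 / α + (1 / (1 - α) + 1 / (1 + α)) + 16 / (1 - α) ^ 2, by positivity,
    fun t ht z => ?_⟩
  have hT : 0 < t ^ (-(1 / 2) : ℝ) := rpow_pos_of_pos ht _
  have hcT : 1 ≤ 8 * t * (t ^ (-(1 / 2) : ℝ)) ^ 2 := by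
    rw [← rpow_natCast, ← rpow_mul ht.le, show (-(1 / 2) : ℝ) * (2 : ℕ) = -1 by norm_num,
      rpow_neg_one, mul_assoc, mul_inv_cancel₀ ht.ne']
    norm_num
  refine (lintegral_Ioi_lintegral_Ioi_le_lintegral_sectorWeight hα0.le t z).trans
    ((lintegral_sectorWeight_mul_enorm_inv_le hα0 hα1 hT hcT z).trans_eq ?_)
  rw [← rpow_mul ht.le]
  ring_nf
end

section
/- Let C₀ > 0 and let g : {u + iv ∈ ℂ : v > 0} → ℂ be measurable with ∫_ℝ |g(u + iv)|² du ≤ C₀² for almost every v > 0. Then there exists a constant C, depending only on C₀, such that for all t > 0: ∫_0^∞ ∫_v^∞ |g(u + iv)| e^{−8tuv} du dv ≤ C t^{−3/4}. -/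
open MeasureTheory Set
open scoped ENNReal

lemma lint_exp (a : ℝ) {b : ℝ} (hb : 0 < b) :
    ∫⁻ x in Set.Ioi a, ENNReal.ofReal (Real.exp (-(b * x))) =
      ENNReal.ofReal (Real.exp (-(b * a)) / b) := by
  rw [← ofReal_integral_eq_lintegral_ofReal]
  · congr 1
    have h := integral_comp_mul_left_Ioi (fun x => Real.exp (-x)) a hb
    simp only [smul_eq_mul] at h
    rw [h, integral_exp_neg_Ioi]
    rw [div_eq_inv_mul]
  · have := exp_neg_integrableOn_Ioi a hb
    exact (by simpa [neg_mul] using this : IntegrableOn (fun x => Real.exp (-(b * x))) (Ioi a))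
  · filter_upwards with x using (Real.exp_pos _).le

lemma lint_rpow {a : ℝ} (ha : 0 < a) :
    ∫⁻ x in Set.Ioc 0 a, ENNReal.ofReal (x ^ (-(1:ℝ)/2)) =
      ENNReal.ofReal (2 * a ^ ((1:ℝ)/2)) := by
  rw [← ofReal_integral_eq_lintegral_ofReal]
  · congr 1
    rw [← intervalIntegral.integral_of_le ha.le,
      integral_rpow (Or.inl (by norm_num))]
    rw [Real.zero_rpow (by norm_num)]
    norm_num
    ring
  · exact (intervalIntegral.intervalIntegrable_rpow' (by norm_num)).1
  · filter_upwards [ae_restrict_mem measurableSet_Ioc] with x hx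
    exact Real.rpow_nonneg hx.1.le _

lemma inner_CS {g : ℂ → ℂ} (hg : Measurable g) {C₀ t v : ℝ} (hC₀ : 0 ≤ C₀)
    (ht : 0 < t) (hv : 0 < v)
    (Hv : ∫⁻ u : ℝ, ENNReal.ofReal (‖g ((u:ℂ) + (v:ℂ)*Complex.I)‖ ^ 2) ≤
      ENNReal.ofReal (C₀ ^ 2)) :
    ∫⁻ u in Set.Ioi v,
        ENNReal.ofReal (‖g ((u:ℂ) + (v:ℂ)*Complex.I)‖ * Real.exp (-8*t*u*v)) ≤
      ENNReal.ofReal (C₀ * (Real.exp (-(16*t*v*v)) / (16*t*v)) ^ ((1:ℝ)/2)) := by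
  set f₁ : ℝ → ℝ≥0∞ := fun u => ENNReal.ofReal ‖g ((u:ℂ) + (v:ℂ)*Complex.I)‖ with hf₁def
  set f₂ : ℝ → ℝ≥0∞ := fun u => ENNReal.ofReal (Real.exp (-8*t*u*v)) with hf₂def
  have hm : Measurable fun u : ℝ => g ((u:ℂ) + (v:ℂ)*Complex.I) :=
    hg.comp ((Complex.measurable_ofReal).add_const _)
  have hf₁ : Measurable f₁ := hm.norm.ennreal_ofReal
  have hf₂ : Measurable f₂ :=
    (Real.measurable_exp.comp (by fun_prop)).ennreal_ofReal
  have hpq : Real.HolderConjugate 2 2 := ⟨by norm_num, by norm_num, by norm_num⟩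
  have key := ENNReal.lintegral_mul_le_Lp_mul_Lq (volume.restrict (Set.Ioi v)) hpq
    hf₁.aemeasurable hf₂.aemeasurable
  have h1 : (∫⁻ u in Set.Ioi v, f₁ u ^ (2:ℝ)) ^ ((1:ℝ)/2) ≤ ENNReal.ofReal C₀ := by
    have e1 : ∀ u : ℝ, f₁ u ^ (2:ℝ) =
        ENNReal.ofReal (‖g ((u:ℂ) + (v:ℂ)*Complex.I)‖ ^ 2) := by
      intro u
      show ENNReal.ofReal ‖g ((u:ℂ) + (v:ℂ)*Complex.I)‖ ^ (2:ℝ) = _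
      rw [ENNReal.ofReal_rpow_of_nonneg (norm_nonneg _) (by norm_num : (0:ℝ) ≤ 2),
        show ((2:ℝ)) = ((2:ℕ):ℝ) by norm_num, Real.rpow_natCast]
    calc (∫⁻ u in Set.Ioi v, f₁ u ^ (2:ℝ)) ^ ((1:ℝ)/2)
        ≤ (ENNReal.ofReal (C₀ ^ 2)) ^ ((1:ℝ)/2) := by
          apply ENNReal.rpow_le_rpow _ (by norm_num)
          simp only [e1]
          exact le_trans (setLIntegral_le_lintegral _ _) Hv
      _ = ENNReal.ofReal C₀ := by
          rw [ENNReal.ofReal_rpow_of_nonneg (by positivity) (by norm_num)]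
          congr 1
          rw [← Real.rpow_natCast C₀ 2, ← Real.rpow_mul hC₀]
          norm_num
  have h2 : (∫⁻ u in Set.Ioi v, f₂ u ^ (2:ℝ)) ^ ((1:ℝ)/2) =
      ENNReal.ofReal ((Real.exp (-(16*t*v*v)) / (16*t*v)) ^ ((1:ℝ)/2)) := by
    have e2 : ∀ u : ℝ, f₂ u ^ (2:ℝ) = ENNReal.ofReal (Real.exp (-((16*t*v) * u))) := by
      intro u
      show ENNReal.ofReal (Real.exp (-8*t*u*v)) ^ (2:ℝ) = _
      rw [ENNReal.ofReal_rpow_of_nonneg (Real.exp_pos _).le (by norm_num : (0:ℝ) ≤ 2),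
        Real.rpow_def_of_pos (Real.exp_pos _), Real.log_exp]
      congr 1
      ring
    simp only [e2]
    rw [lint_exp v (by positivity : (0:ℝ) < 16*t*v),
      ENNReal.ofReal_rpow_of_nonneg (by positivity) (by norm_num)]
  calc ∫⁻ u in Set.Ioi v,
        ENNReal.ofReal (‖g ((u:ℂ) + (v:ℂ)*Complex.I)‖ * Real.exp (-8*t*u*v))
      = ∫⁻ u in Set.Ioi v, (f₁ * f₂) u := by
        apply lintegral_congr
        intro u
        simp only [Pi.mul_apply, hf₁def, hf₂def]
        exact ENNReal.ofReal_mul (norm_nonneg _)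
    _ ≤ (∫⁻ u in Set.Ioi v, f₁ u ^ (2:ℝ)) ^ ((1:ℝ)/2) *
        (∫⁻ u in Set.Ioi v, f₂ u ^ (2:ℝ)) ^ ((1:ℝ)/2) := by
        simpa [one_div] using key
    _ ≤ ENNReal.ofReal C₀ *
        ENNReal.ofReal ((Real.exp (-(16*t*v*v)) / (16*t*v)) ^ ((1:ℝ)/2)) := by
        rw [h2]; exact mul_le_mul_left h1 _
    _ = ENNReal.ofReal (C₀ * (Real.exp (-(16*t*v*v)) / (16*t*v)) ^ ((1:ℝ)/2)) := by
        rw [← ENNReal.ofReal_mul hC₀]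

/-- Let `C₀ > 0` and let `g` be measurable on the upper half-plane with
`∫_ℝ |g(u+iv)|² du ≤ C₀²` for almost every `v > 0`.  Then there is a constant `C`,
depending only on `C₀`, such that for all `t > 0`,
`∫₀^∞ ∫_v^∞ |g(u+iv)| e^{-8tuv} du dv ≤ C t^{-3/4}`. -/
theorem statement17 (C₀ : ℝ) (hC₀ : 0 < C₀) :
    ∃ C : ℝ,
      ∀ g : ℂ → ℂ, Measurable g →
      (∀ᵐ (v : ℝ) ∂(volume.restrict (Set.Ioi (0 : ℝ))),
        ∫⁻ (u : ℝ), ENNReal.ofReal (‖g ((u : ℂ) + (v : ℂ) * Complex.I)‖ ^ 2) ≤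
          ENNReal.ofReal (C₀ ^ 2)) →
      ∀ t : ℝ, 0 < t →
        ∫⁻ (v : ℝ) in Set.Ioi (0 : ℝ), ∫⁻ (u : ℝ) in Set.Ioi v,
            ENNReal.ofReal
              (‖g ((u : ℂ) + (v : ℂ) * Complex.I)‖ * Real.exp (-8 * t * u * v)) ≤
          ENNReal.ofReal (C * t ^ (-(3 : ℝ) / 4)) := by
  refine ⟨C₀, ?_⟩
  intro g hg hb t ht
  set s : ℝ := t ^ ((1:ℝ)/2) with hs
  have hspos : 0 < s := Real.rpow_pos_of_pos ht _
  set a : ℝ := t ^ (-(1:ℝ)/2) with hadef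
  have hapos : 0 < a := Real.rpow_pos_of_pos ht _
  have hsa : s * a = 1 := by
    rw [hs, hadef, ← Real.rpow_add ht]; norm_num
  have hta : t * a = s := by
    rw [hadef, hs]
    nth_rewrite 1 [← Real.rpow_one t]
    rw [← Real.rpow_add ht]; norm_num
  -- abbreviations
  set A : ℝ := t ^ (-(1:ℝ)/2) with hA
  set B : ℝ := t ^ (-(1:ℝ)/4) with hB
  have hApos : 0 < A := Real.rpow_pos_of_pos ht _
  have hBpos : 0 < B := Real.rpow_pos_of_pos ht _
  have hAB : A * B = t ^ (-(3:ℝ)/4) := by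
    rw [hA, hB, ← Real.rpow_add ht]; norm_num
  have h16 : (16:ℝ) ^ (-(1:ℝ)/2) = 1/4 := by
    rw [show (16:ℝ) = (4:ℝ) ^ ((2:ℕ):ℝ) by
        rw [Real.rpow_natCast]; norm_num,
      ← Real.rpow_mul (by norm_num : (0:ℝ) ≤ 4)]
    rw [show ((2:ℕ):ℝ) * (-(1:ℝ)/2) = -1 by norm_num, Real.rpow_neg_one]
    norm_num
  have ha12 : a ^ ((1:ℝ)/2) = B := by
    rw [hadef, hB, ← Real.rpow_mul ht.le]; norm_num
  have hs12 : s ^ (-(1:ℝ)/2) = B := by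
    rw [hs, hB, ← Real.rpow_mul ht.le]; norm_num
  have hsinv : s⁻¹ = A := by
    rw [hs, hA, ← Real.rpow_neg_one (t ^ ((1:ℝ)/2)), ← Real.rpow_mul ht.le]
    norm_num
  -- step 1 : pointwise Cauchy-Schwarz bound
  have step1 : (∫⁻ (v : ℝ) in Set.Ioi (0 : ℝ), ∫⁻ (u : ℝ) in Set.Ioi v,
        ENNReal.ofReal
          (‖g ((u : ℂ) + (v : ℂ) * Complex.I)‖ * Real.exp (-8 * t * u * v))) ≤
      ∫⁻ v in Set.Ioi (0:ℝ),
        ENNReal.ofReal (C₀ * (Real.exp (-(16*t*v*v)) / (16*t*v)) ^ ((1:ℝ)/2)) := by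
    apply lintegral_mono_ae
    filter_upwards [hb, ae_restrict_mem measurableSet_Ioi] with v Hv hv
    exact inner_CS hg hC₀.le ht hv Hv
  -- split the outer integral
  have step2 : (∫⁻ v in Set.Ioi (0:ℝ),
        ENNReal.ofReal (C₀ * (Real.exp (-(16*t*v*v)) / (16*t*v)) ^ ((1:ℝ)/2))) ≤
      (∫⁻ v in Set.Ioc (0:ℝ) a,
        ENNReal.ofReal (C₀ * (Real.exp (-(16*t*v*v)) / (16*t*v)) ^ ((1:ℝ)/2))) +
      ∫⁻ v in Set.Ioi a,
        ENNReal.ofReal (C₀ * (Real.exp (-(16*t*v*v)) / (16*t*v)) ^ ((1:ℝ)/2)) := by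
    have hsplit : Set.Ioi (0:ℝ) = Set.Ioc 0 a ∪ Set.Ioi a :=
      (Set.Ioc_union_Ioi_eq_Ioi hapos.le).symm
    rw [hsplit]
    exact lintegral_union_le _ _ _
  -- piece A
  have mA : Measurable fun v : ℝ =>
      ENNReal.ofReal (C₀ * ((1/4) * A)) * ENNReal.ofReal (v ^ (-(1:ℝ)/2)) := by
    fun_prop
  have pieceA : (∫⁻ v in Set.Ioc (0:ℝ) a,
        ENNReal.ofReal (C₀ * (Real.exp (-(16*t*v*v)) / (16*t*v)) ^ ((1:ℝ)/2))) ≤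
      ENNReal.ofReal (C₀ * ((1/4) * A)) * ENNReal.ofReal (2 * B) := by
    have hmono : ∀ v ∈ Set.Ioc (0:ℝ) a,
        ENNReal.ofReal (C₀ * (Real.exp (-(16*t*v*v)) / (16*t*v)) ^ ((1:ℝ)/2)) ≤
        ENNReal.ofReal (C₀ * ((1/4) * A)) * ENNReal.ofReal (v ^ (-(1:ℝ)/2)) := by
      intro v hv
      have hv0 : 0 < v := hv.1
      rw [← ENNReal.ofReal_mul (by positivity)]
      apply ENNReal.ofReal_le_ofReal
      rw [mul_assoc C₀ ((1:ℝ)/4 * A)]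
      apply mul_le_mul_of_nonneg_left _ hC₀.le
      have hkey : Real.exp (-(16*t*v*v)) / (16*t*v) ≤ 1 / (16*t*v) := by
        have hd : (0:ℝ) < 16*t*v := by have := hv.1; positivity
        exact (div_le_div_iff_of_pos_right hd).2 (Real.exp_le_one_iff.2
          (neg_nonpos.2 (by have := hv.1; positivity)))
      calc (Real.exp (-(16*t*v*v)) / (16*t*v)) ^ ((1:ℝ)/2)
          ≤ ((16*t)⁻¹ * v⁻¹) ^ ((1:ℝ)/2) := by
            apply Real.rpow_le_rpow (by positivity) _ (by norm_num)
            calc Real.exp (-(16*t*v*v)) / (16*t*v) ≤ 1 / (16*t*v) := hkey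
              _ = (16*t)⁻¹ * v⁻¹ := by rw [← mul_inv]; ring_nf
        _ = (16:ℝ) ^ (-(1:ℝ)/2) * t ^ (-(1:ℝ)/2) * v ^ (-(1:ℝ)/2) := by
            rw [Real.mul_rpow (by positivity) (by positivity),
              ← Real.rpow_neg_one (16*t), ← Real.rpow_neg_one v,
              ← Real.rpow_mul (by positivity : (0:ℝ) ≤ 16*t),
              ← Real.rpow_mul hv0.le,
              Real.mul_rpow (by norm_num : (0:ℝ) ≤ 16) ht.le]
            norm_num
        _ = (1/4) * A * v ^ (-(1:ℝ)/2) := by rw [h16, hA]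
    calc (∫⁻ v in Set.Ioc (0:ℝ) a,
          ENNReal.ofReal (C₀ * (Real.exp (-(16*t*v*v)) / (16*t*v)) ^ ((1:ℝ)/2)))
        ≤ ∫⁻ v in Set.Ioc (0:ℝ) a,
            ENNReal.ofReal (C₀ * ((1/4) * A)) * ENNReal.ofReal (v ^ (-(1:ℝ)/2)) :=
          setLIntegral_mono mA hmono
      _ = ENNReal.ofReal (C₀ * ((1/4) * A)) *
            ∫⁻ v in Set.Ioc (0:ℝ) a, ENNReal.ofReal (v ^ (-(1:ℝ)/2)) := by
          rw [lintegral_const_mul _ (by fun_prop)]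
      _ = ENNReal.ofReal (C₀ * ((1/4) * A)) * ENNReal.ofReal (2 * B) := by
          rw [lint_rpow hapos, ha12]
  -- piece B
  have mB : Measurable fun v : ℝ =>
      ENNReal.ofReal (C₀ * (16*s) ^ (-(1:ℝ)/2)) *
        ENNReal.ofReal (Real.exp (-((8*s) * v))) := by fun_prop
  have pieceB : (∫⁻ v in Set.Ioi a,
        ENNReal.ofReal (C₀ * (Real.exp (-(16*t*v*v)) / (16*t*v)) ^ ((1:ℝ)/2))) ≤
      ENNReal.ofReal (C₀ * (16*s) ^ (-(1:ℝ)/2)) * ENNReal.ofReal (1 / (8*s)) := by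
    have hmono : ∀ v ∈ Set.Ioi a,
        ENNReal.ofReal (C₀ * (Real.exp (-(16*t*v*v)) / (16*t*v)) ^ ((1:ℝ)/2)) ≤
        ENNReal.ofReal (C₀ * (16*s) ^ (-(1:ℝ)/2)) *
          ENNReal.ofReal (Real.exp (-((8*s) * v))) := by
      intro v hv
      have hav : a < v := hv
      have hvpos : 0 < v := lt_trans hapos hav
      rw [← ENNReal.ofReal_mul (by positivity)]
      apply ENNReal.ofReal_le_ofReal
      rw [mul_assoc C₀ ((16*s) ^ (-(1:ℝ)/2))]
      apply mul_le_mul_of_nonneg_left _ hC₀.le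
      have hkey : Real.exp (-(16*t*v*v)) / (16*t*v) ≤
          Real.exp (-((16*s) * v)) / (16*s) := by
        apply div_le_div₀ (Real.exp_pos _).le _ (by positivity) _
        · rw [Real.exp_le_exp]
          have hseq : s = t * a := hta.symm
          rw [hseq]
          nlinarith [mul_nonneg (mul_nonneg (by positivity : (0:ℝ) ≤ 16*t) hvpos.le)
            (sub_nonneg.2 hav.le)]
        · rw [← hta]
          nlinarith [mul_nonneg ht.le (sub_nonneg.2 hav.le)]
      calc (Real.exp (-(16*t*v*v)) / (16*t*v)) ^ ((1:ℝ)/2)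
          ≤ (Real.exp (-((16*s) * v)) / (16*s)) ^ ((1:ℝ)/2) :=
            Real.rpow_le_rpow (by positivity) hkey (by norm_num)
        _ = (16*s) ^ (-(1:ℝ)/2) * Real.exp (-((8*s) * v)) := by
            rw [Real.div_rpow (Real.exp_pos _).le (by positivity),
              Real.rpow_def_of_pos (Real.exp_pos _), Real.log_exp,
              div_eq_mul_inv, ← Real.rpow_neg (by positivity : (0:ℝ) ≤ 16*s)]
            rw [show -((16*s) * v) * ((1:ℝ)/2) = -((8*s) * v) by ring]
            rw [show -((1:ℝ)/2) = (-(1:ℝ)/2) by norm_num]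
            ring
    calc (∫⁻ v in Set.Ioi a,
          ENNReal.ofReal (C₀ * (Real.exp (-(16*t*v*v)) / (16*t*v)) ^ ((1:ℝ)/2)))
        ≤ ∫⁻ v in Set.Ioi a, ENNReal.ofReal (C₀ * (16*s) ^ (-(1:ℝ)/2)) *
            ENNReal.ofReal (Real.exp (-((8*s) * v))) := setLIntegral_mono mB hmono
      _ = ENNReal.ofReal (C₀ * (16*s) ^ (-(1:ℝ)/2)) *
            ∫⁻ v in Set.Ioi a, ENNReal.ofReal (Real.exp (-((8*s) * v))) := by
          rw [lintegral_const_mul _ (by fun_prop)]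
      _ ≤ ENNReal.ofReal (C₀ * (16*s) ^ (-(1:ℝ)/2)) * ENNReal.ofReal (1 / (8*s)) := by
          rw [lint_exp a (by positivity : (0:ℝ) < 8*s)]
          apply mul_le_mul_right
          apply ENNReal.ofReal_le_ofReal
          rw [show 8*s*a = 8*(s*a) by ring, hsa, mul_one]
          exact (div_le_div_iff_of_pos_right (by positivity)).2
            (Real.exp_le_one_iff.2 (by norm_num))
  -- combine
  calc (∫⁻ (v : ℝ) in Set.Ioi (0 : ℝ), ∫⁻ (u : ℝ) in Set.Ioi v,
        ENNReal.ofReal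
          (‖g ((u : ℂ) + (v : ℂ) * Complex.I)‖ * Real.exp (-8 * t * u * v)))
      ≤ ENNReal.ofReal (C₀ * ((1/4) * A)) * ENNReal.ofReal (2 * B) +
        ENNReal.ofReal (C₀ * (16*s) ^ (-(1:ℝ)/2)) * ENNReal.ofReal (1 / (8*s)) :=
        le_trans step1 (le_trans step2 (add_le_add pieceA pieceB))
    _ ≤ ENNReal.ofReal (C₀ * t ^ (-(3:ℝ)/4)) := by
        rw [← ENNReal.ofReal_mul (by positivity), ← ENNReal.ofReal_mul (by positivity),
          ← ENNReal.ofReal_add (by positivity) (by positivity)]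
        apply ENNReal.ofReal_le_ofReal
        have h16s : (16*s) ^ (-(1:ℝ)/2) = (1/4) * B := by
          rw [Real.mul_rpow (by norm_num) hspos.le, h16, hs12]
        have h8s : 1 / (8*s) = (1/8) * A := by
          rw [← hsinv]; field_simp
        rw [h16s, h8s, ← hAB]
        nlinarith [mul_pos hApos hBpos, hC₀]
end

section
/- For every α ∈ (0, 1) there exists a constant C = C(α) > 0 such that for all t > 0: ∫_0^∞ ∫_v^∞ (u² + v²)^{−α/2} e^{−8tuv} du dv ≤ C t^{−1 + α/2}. -/
open MeasureTheory

open Real Set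

lemma auxA_val {α c : ℝ} (hα1 : α < 1) (hc : 0 < c) :
    ∫ u in Ioi (0:ℝ), u ^ (-α) * Real.exp (-(c * u)) = c ^ (α - 1) * Real.Gamma (1 - α) := by
  have h := integral_rpow_mul_exp_neg_mul_Ioi (a := 1 - α) (r := c) (by linarith) hc
  rw [show (1:ℝ) - α - 1 = -α by ring] at h
  rw [h, one_div, Real.inv_rpow hc.le, ← Real.rpow_neg hc.le, show -(1-α) = α - 1 by ring]

lemma auxA_int {α c : ℝ} (hα1 : α < 1) (hc : 0 < c) :
    IntegrableOn (fun u : ℝ => u ^ (-α) * Real.exp (-(c * u))) (Ioi 0) := by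
  have h := integrableOn_rpow_mul_exp_neg_mul_rpow (p := 1) (s := -α) (b := c)
    (by linarith) one_pos hc
  refine h.congr_fun (fun x hx => ?_) measurableSet_Ioi
  simp only [Real.rpow_one, neg_mul]

lemma auxB_val {α b : ℝ} (hα0 : 0 < α) (hb : 0 < b) :
    ∫ v in Ioi (0:ℝ), v ^ (α - 1) * Real.exp (-(b * v ^ 2)) =
      b ^ (-(α / 2)) * (1 / 2) * Real.Gamma (α / 2) := by
  have h := integral_rpow_mul_exp_neg_mul_rpow (p := 2) (q := α - 1) (b := b)
    two_pos (by linarith) hb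
  rw [show α - 1 + 1 = α by ring] at h
  rw [show -(α/2) = -α/2 by ring, ← h]
  refine setIntegral_congr_fun measurableSet_Ioi (fun x hx => ?_)
  rw [← Real.rpow_natCast x 2, neg_mul]
  norm_num

lemma auxB_int {α b : ℝ} (hα0 : 0 < α) (hb : 0 < b) :
    IntegrableOn (fun v : ℝ => v ^ (α - 1) * Real.exp (-(b * v ^ 2))) (Ioi 0) := by
  have h := integrableOn_rpow_mul_exp_neg_mul_sq hb (s := α - 1) (by linarith)
  refine h.congr_fun (fun x hx => ?_) measurableSet_Ioi
  simp only [neg_mul]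

/-- inner bound : for `v > 0`, `t > 0`. -/
lemma inner_bound {α t v : ℝ} (hα0 : 0 < α) (hα1 : α < 1) (ht : 0 < t) (hv : 0 < v) :
    ∫⁻ (u : ℝ) in Set.Ioi v,
        ENNReal.ofReal ((u ^ 2 + v ^ 2) ^ (-(α / 2)) * Real.exp (-8 * t * u * v)) ≤
      ENNReal.ofReal (Real.Gamma (1 - α) *
        ((4 * t * v) ^ (α - 1) * Real.exp (-(4 * t * v ^ 2)))) := by
  have hc : 0 < 4 * t * v := by positivity
  calc
    ∫⁻ (u : ℝ) in Set.Ioi v,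
        ENNReal.ofReal ((u ^ 2 + v ^ 2) ^ (-(α / 2)) * Real.exp (-8 * t * u * v))
      ≤ ∫⁻ (u : ℝ) in Set.Ioi v,
          ENNReal.ofReal ((u ^ (-α) * Real.exp (-(4 * t * v * u))) *
            Real.exp (-(4 * t * v ^ 2))) := by
        refine setLIntegral_mono' measurableSet_Ioi (fun u hu => ?_)
        have hu' : v < u := hu
        have hu0 : 0 < u := hv.trans hu'
        apply ENNReal.ofReal_le_ofReal
        have h1 : (u ^ 2 + v ^ 2) ^ (-(α / 2)) ≤ u ^ (-α) := by
          have e1 : (u ^ 2 : ℝ) ^ (-(α / 2)) = u ^ (-α) := by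
            rw [← Real.rpow_natCast u 2, ← Real.rpow_mul hu0.le]
            congr 1
            push_cast
            ring
          rw [← e1]
          apply Real.rpow_le_rpow_of_nonpos (by positivity) (by nlinarith) (by linarith)
        have h2 : Real.exp (-8 * t * u * v) ≤
            Real.exp (-(4 * t * v * u)) * Real.exp (-(4 * t * v ^ 2)) := by
          rw [← Real.exp_add]
          apply Real.exp_le_exp.mpr
          nlinarith
        calc (u ^ 2 + v ^ 2) ^ (-(α / 2)) * Real.exp (-8 * t * u * v)
            ≤ u ^ (-α) * (Real.exp (-(4 * t * v * u)) * Real.exp (-(4 * t * v ^ 2))) := by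
              apply mul_le_mul h1 h2 (Real.exp_pos _).le (by positivity)
          _ = (u ^ (-α) * Real.exp (-(4 * t * v * u))) * Real.exp (-(4 * t * v ^ 2)) := by ring
    _ ≤ ∫⁻ (u : ℝ) in Set.Ioi 0,
          ENNReal.ofReal ((u ^ (-α) * Real.exp (-(4 * t * v * u))) *
            Real.exp (-(4 * t * v ^ 2))) :=
        lintegral_mono_set (Ioi_subset_Ioi hv.le)
    _ = ENNReal.ofReal (∫ u in Ioi (0:ℝ),
          (u ^ (-α) * Real.exp (-(4 * t * v * u))) * Real.exp (-(4 * t * v ^ 2))) := by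
        rw [ofReal_integral_eq_lintegral_ofReal]
        · exact (auxA_int hα1 hc).mul_const _
        · filter_upwards [ae_restrict_mem measurableSet_Ioi] with u hu
          have hu0 : (0:ℝ) < u := hu
          positivity
    _ = ENNReal.ofReal (Real.Gamma (1 - α) *
          ((4 * t * v) ^ (α - 1) * Real.exp (-(4 * t * v ^ 2)))) := by
        rw [integral_mul_const, auxA_val hα1 hc]
        ring_nf


/-- For every `α ∈ (0,1)` there is a constant `C = C(α) > 0` such that
for all `t > 0`,
`∫₀^∞ ∫_v^∞ (u²+v²)^{-α/2} e^{-8tuv} du dv ≤ C t^{-1+α/2}`. -/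
theorem statement18 (α : ℝ) (hα0 : 0 < α) (hα1 : α < 1) :
    ∃ C : ℝ, 0 < C ∧
      ∀ t : ℝ, 0 < t →
        ∫⁻ (v : ℝ) in Set.Ioi (0 : ℝ), ∫⁻ (u : ℝ) in Set.Ioi v,
            ENNReal.ofReal ((u ^ 2 + v ^ 2) ^ (-(α / 2)) * Real.exp (-8 * t * u * v)) ≤
          ENNReal.ofReal (C * t ^ (-1 + α / 2)) := by
  have hG1 : 0 < Real.Gamma (1 - α) := Real.Gamma_pos_of_pos (by linarith)
  have hG2 : 0 < Real.Gamma (α / 2) := Real.Gamma_pos_of_pos (by linarith)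
  refine ⟨Real.Gamma (1 - α) * ((4:ℝ) ^ (α - 1) * ((4:ℝ) ^ (-(α/2)) * (1/2) *
    Real.Gamma (α/2))), by positivity, fun t ht => ?_⟩
  have hb : (0:ℝ) < 4 * t := by positivity
  calc
    ∫⁻ (v : ℝ) in Set.Ioi (0 : ℝ), ∫⁻ (u : ℝ) in Set.Ioi v,
        ENNReal.ofReal ((u ^ 2 + v ^ 2) ^ (-(α / 2)) * Real.exp (-8 * t * u * v))
      ≤ ∫⁻ (v : ℝ) in Set.Ioi (0 : ℝ),
          ENNReal.ofReal (Real.Gamma (1 - α) * ((4 * t) ^ (α - 1) *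
            (v ^ (α - 1) * Real.exp (-(4 * t * v ^ 2))))) := by
        refine setLIntegral_mono' measurableSet_Ioi (fun v hv => ?_)
        have hv0 : (0:ℝ) < v := hv
        refine le_trans (inner_bound hα0 hα1 ht hv0) (le_of_eq ?_)
        congr 1
        rw [show (4 * t * v : ℝ) = (4 * t) * v by ring,
          Real.mul_rpow hb.le hv0.le]
        ring
    _ = ENNReal.ofReal (∫ v in Ioi (0:ℝ), Real.Gamma (1 - α) * ((4 * t) ^ (α - 1) *
          (v ^ (α - 1) * Real.exp (-(4 * t * v ^ 2))))) := by
        rw [ofReal_integral_eq_lintegral_ofReal]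
        · exact ((auxB_int hα0 hb).const_mul _).const_mul _
        · filter_upwards [ae_restrict_mem measurableSet_Ioi] with v hv
          have hv0 : (0:ℝ) < v := hv
          positivity
    _ ≤ ENNReal.ofReal (Real.Gamma (1 - α) * ((4:ℝ) ^ (α - 1) * ((4:ℝ) ^ (-(α/2)) * (1/2) *
          Real.Gamma (α/2))) * t ^ (-1 + α / 2)) := by
        apply le_of_eq
        rw [integral_const_mul, integral_const_mul, auxB_val hα0 hb]
        congr 1
        rw [Real.mul_rpow (by norm_num : (0:ℝ) ≤ 4) ht.le,
          Real.mul_rpow (by norm_num : (0:ℝ) ≤ 4) ht.le,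
          show (-1 : ℝ) + α/2 = (α - 1) + -(α/2) by ring, Real.rpow_add ht]
        ring
end

section
/- There exists a constant C > 0 such that for every t > 0 and every a ∈ ℝ: ∫_ℝ |v|^{−1/2} e^{−8t(v − a)²} dv ≤ C t^{−1/4}. -/
/-!
Split the line at `|v| = R := t^{-1/2}`. Near the origin bound the Gaussian factor by `1`, so
that part is at most `∫_{-R}^{R} |v|^{-1/2} dv = 4 R^{1/2} = 4 t^{-1/4}`. Away from the origin
bound `|v|^{-1/2}` by `R^{-1/2} = t^{1/4}`, leaving the Gaussian integral
`√(π / 8t) ≤ t^{-1/2}`. Both parts are `O(t^{-1/4})`, uniformly in the shift `a`.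
-/

open MeasureTheory Set Real
open scoped ENNReal

theorem lintegral_comp_abs (f : ℝ → ℝ≥0∞) : ∫⁻ x, f |x| = 2 * ∫⁻ x in Ioi 0, f x := by
  have h_pos : ∫⁻ x in Ioi 0, f |x| = ∫⁻ x in Ioi 0, f x :=
    setLIntegral_congr_fun measurableSet_Ioi fun x hx => by rw [abs_of_pos hx]
  have h_neg : ∫⁻ x in Iic 0, f |x| = ∫⁻ x in Ioi 0, f x := by
    rw [← (Measure.measurePreserving_neg (volume : Measure ℝ)).setLIntegral_comp_preimage_emb
      (Homeomorph.neg ℝ).measurableEmbedding, neg_preimage, neg_Iic, neg_zero,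
      ← setLIntegral_congr Ioi_ae_eq_Ici]
    simp_rw [abs_neg, h_pos]
  rw [← lintegral_add_compl _ measurableSet_Ioi, compl_Ioi, h_pos, h_neg, two_mul]

theorem lintegral_rpow_Ioc {r R : ℝ} (hr : -1 < r) (hR : 0 ≤ R) :
    ∫⁻ y in Ioc 0 R, ENNReal.ofReal (y ^ r) = ENNReal.ofReal (R ^ (r + 1) / (r + 1)) := by
  rw [← ofReal_integral_eq_lintegral_ofReal
      (intervalIntegral.intervalIntegrable_rpow' hr (a := 0) (b := R)).1
      (ae_restrict_of_forall_mem measurableSet_Ioc fun y hy => rpow_nonneg hy.1.le r),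
    ← intervalIntegral.integral_of_le hR, integral_rpow (Or.inl hr),
    zero_rpow (by linarith), sub_zero]

theorem lintegral_abs_rpow_mul_le {r R : ℝ} (hr : -1 < r) (hr₀ : r ≤ 0) (hR : 0 < R)
    {f : ℝ → ℝ≥0∞} (hf : ∀ v, f v ≤ 1) :
    ∫⁻ v, ENNReal.ofReal (|v| ^ r) * f v ≤
      ENNReal.ofReal (2 * (R ^ (r + 1) / (r + 1))) + ENNReal.ofReal (R ^ r) * ∫⁻ v, f v := by
  set g : ℝ → ℝ≥0∞ := (Iic R).indicator fun y => ENNReal.ofReal (y ^ r)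
  have hg : Measurable fun v => g |v| :=
    ((by fun_prop : Measurable fun y : ℝ => ENNReal.ofReal (y ^ r)).indicator
      measurableSet_Iic).comp measurable_abs
  have h_split (v : ℝ) : ENNReal.ofReal (|v| ^ r) * f v ≤ g |v| + ENNReal.ofReal (R ^ r) * f v := by
    by_cases hv : |v| ≤ R
    · refine le_add_right ?_
      simp only [g, indicator_of_mem (mem_Iic.2 hv)]
      exact mul_le_of_le_one_right' (hf v)
    · refine le_add_left (mul_le_mul_left ?_ _)
      exact ENNReal.ofReal_le_ofReal (rpow_le_rpow_of_nonpos hR (not_le.1 hv).le hr₀)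
  have h_near : ∫⁻ v, g |v| = ENNReal.ofReal (2 * (R ^ (r + 1) / (r + 1))) := by
    rw [lintegral_comp_abs, lintegral_indicator measurableSet_Iic,
      Measure.restrict_restrict measurableSet_Iic, Iic_inter_Ioi, lintegral_rpow_Ioc hr hR.le,
      ENNReal.ofReal_mul zero_le_two, ENNReal.ofReal_ofNat]
  calc ∫⁻ v, ENNReal.ofReal (|v| ^ r) * f v
      ≤ (∫⁻ v, g |v|) + ∫⁻ v, ENNReal.ofReal (R ^ r) * f v :=
        (lintegral_mono h_split).trans_eq (lintegral_add_left hg _)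
    _ = _ := by rw [h_near, lintegral_const_mul' _ _ ENNReal.ofReal_ne_top]

theorem lintegral_exp_neg_mul_sub_sq {b : ℝ} (hb : 0 < b) (a : ℝ) :
    ∫⁻ v, ENNReal.ofReal (exp (-b * (v - a) ^ 2)) = ENNReal.ofReal (√(π / b)) := by
  rw [lintegral_sub_right_eq_self (fun v => ENNReal.ofReal (exp (-b * v ^ 2))) a,
    ← ofReal_integral_eq_lintegral_ofReal (integrable_exp_neg_mul_sq hb)
      (Filter.Eventually.of_forall fun _ => (exp_pos _).le), integral_gaussian]

/-- There is a constant `C > 0` such that for every `t > 0` and every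
`a ∈ ℝ`, `∫_ℝ |v|^{-1/2} e^{-8t(v-a)²} dv ≤ C t^{-1/4}`. -/
theorem statement19 :
    ∃ C : ℝ, 0 < C ∧
      ∀ (t : ℝ), 0 < t → ∀ a : ℝ,
        ∫⁻ (v : ℝ),
            ENNReal.ofReal (|v| ^ (-(1 : ℝ) / 2) * Real.exp (-8 * t * (v - a) ^ 2)) ≤
          ENNReal.ofReal (C * t ^ (-(1 : ℝ) / 4)) := by
  refine ⟨5, by norm_num, fun t ht a => ?_⟩
  have h_exp_le_one (v : ℝ) : ENNReal.ofReal (exp (-(8 * t) * (v - a) ^ 2)) ≤ 1 :=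
    ENNReal.ofReal_le_one.2 (exp_le_one_iff.2 (by nlinarith [sq_nonneg (v - a)]))
  have h_bound := lintegral_abs_rpow_mul_le (r := -1 / 2) (by norm_num) (by norm_num)
    (rpow_pos_of_pos ht (-1 / 2)) h_exp_le_one
  rw [lintegral_exp_neg_mul_sub_sq (by positivity) a, ← rpow_mul ht.le, ← rpow_mul ht.le]
    at h_bound
  have h_far : t ^ ((1 : ℝ) / 4) * √(π / (8 * t)) ≤ t ^ (-(1 : ℝ) / 4) := by
    have h_var : π / (8 * t) ≤ t⁻¹ := by
      rw [show π / (8 * t) = π / 8 * t⁻¹ by ring]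
      exact mul_le_of_le_one_left (inv_pos.2 ht).le (by linarith [pi_le_four])
    calc t ^ ((1 : ℝ) / 4) * √(π / (8 * t))
        ≤ t ^ ((1 : ℝ) / 4) * √(t⁻¹) := by gcongr
      _ = t ^ (-(1 : ℝ) / 4) := by
        rw [sqrt_eq_rpow, ← rpow_neg_one, ← rpow_mul ht.le, ← rpow_add ht]
        norm_num
  simp_rw [neg_mul (8 : ℝ) t, ENNReal.ofReal_mul (rpow_nonneg (abs_nonneg _) _)]
  refine h_bound.trans ?_
  rw [← ENNReal.ofReal_mul (by positivity), ← ENNReal.ofReal_add (by positivity) (by positivity)]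
  refine ENNReal.ofReal_le_ofReal ?_
  norm_num
  linarith
end
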